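/- arXiv:2605.04544 — 7 statements merged into one kernel-verified Lean document; each statement's English description precedes it below -/
import Mathlib

section
/- Let F be a field and X, Y, Z pairwise disjoint finite variable types; work in R = MvPolynomial (X ⊕ Y ⊕ Z) F. Let P₀ be a finite set of polynomials in MvPolynomial.supported F (X ∪ Z) that is in z-normal form, and let P₁ be a finite set of polynomials in MvPolynomial.supported F (Y ∪ Z). Suppose there exist polynomials (a_p)_{p ∈ P₀} and (b_q)_{q ∈ P₁} in R, each computed by a width-w roABP in a variable order σ in which the X-variables precede all others, such that Σ_{p ∈ P₀} a_p · p + Σ_{q ∈ P₁} b_q · q = 1. Then there exists a span program over Boolean variables indexed by Z, with vectors in R, of size at most 2·w·|P₀|, that computes an interpolant for (P₀, P₁). -/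
/-- A polynomial `f` is computed by a width-`w` roABP in variable order `σ`. -/
def ROABP {F : Type} [Field F] {V : Type} [Fintype V] {n : ℕ}
    (σ : Fin n ≃ V) (w : ℕ) (f : MvPolynomial V F) : Prop :=
  ∃ (hw : 0 < w) (M : Fin n → Matrix (Fin w) (Fin w) (MvPolynomial V F)),
    (∀ k i j, M k i j ∈ MvPolynomial.supported F ({σ k} : Set V)) ∧
    f = (List.ofFn M).prod ⟨0, hw⟩ ⟨0, hw⟩

/-- A row label of a span program: a positive literal, a negative literal, or the constant 1. -/
inductive SPLabel (Z : Type) where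
  | pos (i : Z)
  | neg (i : Z)
  | one

/-- Evaluation of a label under a Boolean assignment. -/
def SPLabel.evalb {Z : Type} (α : Z → Bool) : SPLabel Z → Bool
  | pos i => α i
  | neg i => !(α i)
  | one => true

/-- A span program over Boolean variables indexed by `Z` with vectors in `V₀`. -/
structure SpanProgram (F : Type) [Field F] (Z : Type) (V₀ : Type)
    [AddCommGroup V₀] [Module F V₀] where
  S : Type
  finS : Fintype S
  label : S → SPLabel Z
  vec : S → V₀
  target : V₀

/-- The size of a span program is the number of its rows. -/
def SpanProgram.size {F Z V₀ : Type} [Field F] [AddCommGroup V₀] [Module F V₀]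
    (P : SpanProgram F Z V₀) : ℕ := @Fintype.card P.S P.finS

/-- Acceptance: the target is in the span of vectors whose label evaluates to `true`. -/
def SpanProgram.accepts {F Z V₀ : Type} [Field F] [AddCommGroup V₀] [Module F V₀]
    (P : SpanProgram F Z V₀) (α : Z → Bool) : Prop :=
  P.target ∈ Submodule.span F (P.vec '' {s | (P.label s).evalb α = true})

/-- A span program is monotone if no row is labelled by a negated literal. -/
def SpanProgram.IsMonotone {F Z V₀ : Type} [Field F] [AddCommGroup V₀] [Module F V₀]
    (P : SpanProgram F Z V₀) : Prop := ∀ s i, P.label s ≠ SPLabel.neg i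

/-- Interpretation of a Boolean value in a field. -/
def boolToField (F : Type) [Field F] (b : Bool) : F := if b then 1 else 0

/-! Since the `X`-variables come first, cutting each roABP `a_p` after the `X`-layers gives
`a_p = ∑ᵢ A_{p,i} B_{p,i}` with `A_{p,i}` an `X`-polynomial and `B_{p,i}` a `(Y,Z)`-polynomial.
Writing `p = p' + z_j p''`, the span program has, for each `p` and `i`, the two rows "`z_j = b`"
(`b ∈ {0,1}`) carrying `A_{p,i} (p' + b p'')`, and target `1`. If `x` satisfies `P₀` at `α`,
evaluation at `(x, α)` kills every active row but not `1`. If `y` satisfies `P₁` at `α`,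
substituting `(y, α)` for the `Y`- and `Z`-variables turns the refutation into
`1 = ∑_{p,i} B_{p,i}(y, α) · A_{p,i} (p' + α_j p'')`, a combination of active rows. -/

open MvPolynomial

namespace MvPolynomial

variable {R A V : Type*} [CommSemiring R] [CommSemiring A] [Algebra R A]

theorem eqOn_supported {φ ψ : MvPolynomial V R →ₐ[R] A} {s : Set V}
    (h : ∀ v ∈ s, φ (X v) = ψ (X v)) : Set.EqOn φ ψ (supported R s) := by
  rw [supported_eq_adjoin_X]
  exact AlgHom.eqOn_adjoin_iff.2 (by rintro _ ⟨v, hv, rfl⟩; exact h v hv)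

theorem aeval_eq_self_of_mem_supported {g : V → MvPolynomial V R} {s : Set V}
    (hg : ∀ v ∈ s, g v = X v) {f : MvPolynomial V R} (hf : f ∈ supported R s) :
    aeval g f = f :=
  eqOn_supported (ψ := AlgHom.id R _) (by simpa using hg) hf

theorem aeval_eq_C_eval_of_mem_supported {g : V → MvPolynomial V R} {e : V → R} {s : Set V}
    (hg : ∀ v ∈ s, g v = C (e v)) {f : MvPolynomial V R} (hf : f ∈ supported R s) :
    aeval g f = C (eval e f) :=
  eqOn_supported (ψ := (Algebra.ofId R _).comp (aeval e)) (by simpa [algebraMap_eq] using hg) hf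

section partialEvalInr

variable {U W : Type*} (e : W → R)

noncomputable def partialEvalInr : MvPolynomial (U ⊕ W) R →ₐ[R] MvPolynomial (U ⊕ W) R :=
  aeval (Sum.elim (fun x => X (Sum.inl x)) fun u => C (e u))

theorem partialEvalInr_X_inr (u : W) : partialEvalInr (U := U) e (X (Sum.inr u)) = C (e u) :=
  aeval_X _ _

theorem partialEvalInr_of_mem_supported_inl {f : MvPolynomial (U ⊕ W) R}
    (hf : f ∈ supported R (Set.range Sum.inl)) : partialEvalInr e f = f :=
  aeval_eq_self_of_mem_supported (by rintro _ ⟨x, rfl⟩; rfl) hf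

theorem partialEvalInr_of_mem_supported_inr {f : MvPolynomial (U ⊕ W) R}
    (hf : f ∈ supported R (Set.range Sum.inr)) :
    partialEvalInr e f = C (eval (Sum.elim (fun _ => 0) e) f) :=
  aeval_eq_C_eval_of_mem_supported (by rintro _ ⟨u, rfl⟩; rfl) hf

theorem partialEvalInr_sum_mul {ι : Type*} [Fintype ι] {A B : ι → MvPolynomial (U ⊕ W) R}
    (hA : ∀ i, A i ∈ supported R (Set.range Sum.inl))
    (hB : ∀ i, B i ∈ supported R (Set.range Sum.inr)) :
    partialEvalInr e (∑ i, A i * B i) = ∑ i, eval (Sum.elim (fun _ => 0) e) (B i) • A i := by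
  refine (map_sum _ _ _).trans (Finset.sum_congr rfl fun i _ => ?_)
  rw [map_mul, partialEvalInr_of_mem_supported_inl e (hA i),
    partialEvalInr_of_mem_supported_inr e (hB i), smul_eq_C_mul, mul_comm]

end partialEvalInr

end MvPolynomial

theorem ROABP.exists_sum_mul {F V : Type} [Field F] [Fintype V] {n w : ℕ} {σ : Fin n ≃ V}
    {f : MvPolynomial V F} (hf : ROABP σ w f) {s : Set V} {m : ℕ}
    (hs : ∀ k : Fin n, (k : ℕ) < m ↔ σ k ∈ s) :
    ∃ A B : Fin w → MvPolynomial V F, (∀ i, A i ∈ supported F s) ∧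
      (∀ i, B i ∈ supported F sᶜ) ∧ f = ∑ i, A i * B i := by
  obtain ⟨hw, M, hM, rfl⟩ := hf
  have hM_mem {t : Set V} {k} (hk : σ k ∈ t) : M k ∈ (supported F t).matrix :=
    fun i j => supported_mono (by simpa using hk) (hM k i j)
  refine ⟨fun i => ((List.ofFn M).take m).prod ⟨0, hw⟩ i,
    fun i => ((List.ofFn M).drop m).prod i ⟨0, hw⟩, fun i => ?_, fun i => ?_, ?_⟩
  · refine list_prod_mem (S := (supported F s).matrix) (fun N hN => ?_) _ i
    obtain ⟨k, hk, rfl⟩ := List.mem_take_iff_getElem.1 hN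
    rw [List.getElem_ofFn]
    exact hM_mem ((hs ⟨k, _⟩).1 (by simp at hk ⊢; omega))
  · refine list_prod_mem (S := (supported F sᶜ).matrix) (fun N hN => ?_) i _
    obtain ⟨k, hk, rfl⟩ := List.mem_drop_iff_getElem.1 hN
    rw [List.getElem_ofFn]
    exact hM_mem (mt (hs _).2 (by simp))
  · rw [← List.prod_take_mul_prod_drop _ m, Matrix.mul_apply]

theorem exists_option_normalForm {R Z : Type*} [NonUnitalNonAssocSemiring R] {S : Set R}
    (hS : (0 : R) ∈ S) (z : Z → R) {p : R}
    (hp : p ∈ S ∨ ∃ (j : Z) (p' p'' : R), p' ∈ S ∧ p'' ∈ S ∧ p = p' + z j * p'') :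
    ∃ (j : Option Z) (p' p'' : R), p' ∈ S ∧ p'' ∈ S ∧ p = p' + j.elim 0 z * p'' ∧
      (j = none → p'' = 0) := by
  rcases hp with hp | ⟨j, p', p'', hp', hp'', rfl⟩
  · exact ⟨none, p, 0, hp, hS, by simp, fun _ => rfl⟩
  · exact ⟨some j, p', p'', hp', hp'', rfl, nofun⟩

def SPLabel.lit {Z : Type} : Option Z → Bool → SPLabel Z
  | none, _ => one
  | some i, true => pos i
  | some i, false => neg i

theorem SPLabel.evalb_lit {Z : Type} (α : Z → Bool) (j : Option Z) (b : Bool) :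
    (lit j b).evalb α = true ↔ ∀ i ∈ j, α i = b := by
  cases j <;> cases b <;> simp [lit, evalb]

theorem SpanProgram.not_accepts_of_linearMap {F Z V₀ : Type} [Field F] [AddCommGroup V₀]
    [Module F V₀] (P : SpanProgram F Z V₀) (α : Z → Bool) (φ : V₀ →ₗ[F] F)
    (ht : φ P.target ≠ 0) (hv : ∀ s, (P.label s).evalb α = true → φ (P.vec s) = 0) :
    ¬ P.accepts α := fun h =>
  ht (Submodule.span_le (p := LinearMap.ker φ).2 (by rintro _ ⟨s, hs, rfl⟩; exact hv s hs) h)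

section zNormalSpanProgram

variable {F Z R ι : Type} [Field F] [CommRing R] [Algebra F R] [Fintype ι] {w : ℕ}

/-- The vector of row `(k, i, b)` is `A k i` times `p_k = p' k + z_{j k} p'' k` with `z_{j k}`
set to `b`; `j k = none` stands for a `p_k` free of `z`-variables. -/
def zNormalSpanProgram (A : ι → Fin w → R) (j : ι → Option Z) (p' p'' : ι → R) :
    SpanProgram F Z R where
  S := ι × Fin w × Bool
  finS := inferInstance
  label s := .lit (j s.1) s.2.2
  vec s := A s.1 s.2.1 * (p' s.1 + algebraMap F R (boolToField F s.2.2) * p'' s.1)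
  target := 1

variable (A : ι → Fin w → R) (j : ι → Option Z) (p' p'' : ι → R)

theorem zNormalSpanProgram_size :
    (zNormalSpanProgram (F := F) A j p' p'').size = 2 * w * Fintype.card ι := by
  change Fintype.card (ι × Fin w × Bool) = _
  simp only [Fintype.card_prod, Fintype.card_fin, Fintype.card_bool]
  ring

theorem zNormalSpanProgram_not_accepts (α : Z → Bool) (φ : R →ₐ[F] F)
    (hnone : ∀ k, j k = none → p'' k = 0)
    (hφ : ∀ k, φ (p' k) + boolToField F ((j k).any α) * φ (p'' k) = 0) :
    ¬ (zNormalSpanProgram (F := F) A j p' p'').accepts α := by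
  refine SpanProgram.not_accepts_of_linearMap _ α φ.toLinearMap (by simp [zNormalSpanProgram]) ?_
  rintro ⟨k, i, b⟩ hs
  replace hs := (SPLabel.evalb_lit α (j k) b).1 hs
  suffices φ (p' k) + boolToField F b * φ (p'' k) = 0 by simp [zNormalSpanProgram, this]
  cases hj : j k with
  | none => simpa [hnone k hj] using hφ k
  | some i => simpa [hj, ← hs i (by simp [hj])] using hφ k

theorem zNormalSpanProgram_accepts (α : Z → Bool) (c : ι → Fin w → F)
    (h : ∑ k, (∑ i, c k i • A k i) *
      (p' k + algebraMap F R (boolToField F ((j k).any α)) * p'' k) = 1) :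
    (zNormalSpanProgram (F := F) A j p' p'').accepts α := by
  change (1 : R) ∈ _
  rw [← h]
  refine Submodule.sum_mem _ fun k _ => ?_
  rw [Finset.sum_mul]
  refine Submodule.sum_mem _ fun i _ => ?_
  rw [smul_mul_assoc]
  refine Submodule.smul_mem _ _ (Submodule.subset_span ⟨(k, i, (j k).any α), ?_, rfl⟩)
  exact (SPLabel.evalb_lit _ _ _).2 (by cases j k <;> simp)

end zNormalSpanProgram

theorem stmt_1_general (F : Type) [Field F]
    (X Y Z : Type) [Fintype X] [Fintype Y] [Fintype Z]
    (P₀ P₁ : Finset (MvPolynomial (X ⊕ Y ⊕ Z) F))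
    -- P₀ is in z-normal form
    (hP₀nf : ∀ p ∈ P₀,
      p ∈ MvPolynomial.supported F (Set.range (Sum.inl : X → X ⊕ Y ⊕ Z)) ∨
      ∃ (j : Z) (p' p'' : MvPolynomial (X ⊕ Y ⊕ Z) F),
        p' ∈ MvPolynomial.supported F (Set.range (Sum.inl : X → X ⊕ Y ⊕ Z)) ∧
        p'' ∈ MvPolynomial.supported F (Set.range (Sum.inl : X → X ⊕ Y ⊕ Z)) ∧
        p = p' + MvPolynomial.X (Sum.inr (Sum.inr j)) * p'')
    -- P₁ is supported on the Y- and Z-variables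
    (hP₁supp : ∀ q ∈ P₁, q ∈ MvPolynomial.supported F
      (Set.range ((Sum.inr ∘ Sum.inl) : Y → X ⊕ Y ⊕ Z) ∪
        Set.range ((Sum.inr ∘ Sum.inr) : Z → X ⊕ Y ⊕ Z)))
    (w : ℕ) (σ : Fin (Fintype.card (X ⊕ Y ⊕ Z)) ≃ (X ⊕ Y ⊕ Z))
    -- the X-variables precede all other variables in σ
    (hσ : ∀ k : Fin (Fintype.card (X ⊕ Y ⊕ Z)), (k : ℕ) < Fintype.card X ↔ ∃ x : X, σ k = Sum.inl x)
    (a b : MvPolynomial (X ⊕ Y ⊕ Z) F → MvPolynomial (X ⊕ Y ⊕ Z) F)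
    (ha : ∀ p ∈ P₀, ROABP σ w (a p))
    (hrefut : (∑ p ∈ P₀, a p * p) + (∑ q ∈ P₁, b q * q) = 1) :
    ∃ SP : SpanProgram F Z (MvPolynomial (X ⊕ Y ⊕ Z) F),
      SP.size ≤ 2 * w * P₀.card ∧
      -- SP computes an interpolant for (P₀, P₁):
      (∀ α : Z → Bool,
        (∃ x : X → Bool, ∀ p ∈ P₀,
          MvPolynomial.eval
            (Sum.elim (fun v => boolToField F (x v))
              (Sum.elim (fun _ : Y => (0 : F)) (fun i => boolToField F (α i)))) p = 0) →
        ¬ SP.accepts α) ∧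
      (∀ α : Z → Bool,
        (∃ y : Y → Bool, ∀ q ∈ P₁,
          MvPolynomial.eval
            (Sum.elim (fun _ : X => (0 : F))
              (Sum.elim (fun v => boolToField F (y v)) (fun i => boolToField F (α i)))) q = 0) →
        SP.accepts α) := by
  classical
  choose A B hA hB ha_eq using fun p : P₀ =>
    (ha p p.2).exists_sum_mul (s := Set.range Sum.inl) fun k => (hσ k).trans (by simp [eq_comm])
  simp only [Set.compl_range_inl] at hB
  choose j p' p'' hp' hp'' hp_eq hnone using fun p : P₀ =>
    exists_option_normalForm (zero_mem _) (fun i => MvPolynomial.X (Sum.inr (Sum.inr i)))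
      (hP₀nf p p.2)
  refine ⟨zNormalSpanProgram A j p' p'', by rw [zNormalSpanProgram_size, Fintype.card_coe],
    fun α ⟨x, hx⟩ => ?_, fun α ⟨y, hy⟩ => ?_⟩
  · refine zNormalSpanProgram_not_accepts A j p' p'' α
      (aeval (Sum.elim (fun v => boolToField F (x v))
        (Sum.elim (fun _ => 0) fun i => boolToField F (α i)))) hnone fun k => ?_
    have hk := hx k k.2
    rw [hp_eq k] at hk
    cases hj : j k <;> simpa [hj, boolToField] using hk
  · set e := Sum.elim (fun v => boolToField F (y v)) fun i => boolToField F (α i)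
    set ψ := partialEvalInr (U := X) e
    have hψP₁ : ∀ q ∈ P₁, ψ (b q * q) = 0 := fun q hq => by
      rw [map_mul, partialEvalInr_of_mem_supported_inr _ (supported_mono ?_ (hP₁supp q hq)),
        hy q hq, map_zero, mul_zero]
      rintro _ (⟨_, rfl⟩ | ⟨_, rfl⟩) <;> exact Set.mem_range_self _
    refine zNormalSpanProgram_accepts A j p' p'' α
      (fun k i => eval (Sum.elim (fun _ => 0) e) (B k i)) ?_
    calc _ = ∑ k : P₀, ψ (a k * k) := by
          refine Finset.sum_congr rfl fun k _ => ?_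
          rw [map_mul, ha_eq k, partialEvalInr_sum_mul _ (hA k) (hB k), hp_eq k, map_add, map_mul,
            partialEvalInr_of_mem_supported_inl _ (hp' k),
            partialEvalInr_of_mem_supported_inl _ (hp'' k)]
          cases j k <;> simp [ψ, e, partialEvalInr_X_inr, boolToField]
      _ = ψ ((∑ p ∈ P₀, a p * p) + ∑ q ∈ P₁, b q * q) := by
        rw [map_add, map_sum, map_sum, Finset.sum_eq_zero hψP₁, add_zero]
        exact Finset.sum_coe_sort P₀ fun p => ψ (a p * p)
      _ = 1 := by rw [hrefut, map_one]

/-- Feasible interpolation for roABP-IPS_LIN: from a width-$w$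
roABP-IPS_LIN refutation of $P_0 ∪ P_1$, in a variable order where the $X$-variables
come first and with $P_0$ in $z$-normal form, one can extract a span program of size
at most $2·w·|P_0|$ computing an interpolant for $(P_0, P_1)$. -/
theorem stmt_1 (F : Type) [Field F]
    (X Y Z : Type) [Fintype X] [Fintype Y] [Fintype Z]
    (P₀ P₁ : Finset (MvPolynomial (X ⊕ Y ⊕ Z) F))
    -- P₀ is supported on the X- and Z-variables
    (hP₀supp : ∀ p ∈ P₀, p ∈ MvPolynomial.supported F
      (Set.range (Sum.inl : X → X ⊕ Y ⊕ Z) ∪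
        Set.range ((Sum.inr ∘ Sum.inr) : Z → X ⊕ Y ⊕ Z)))
    -- P₀ is in z-normal form
    (hP₀nf : ∀ p ∈ P₀,
      p ∈ MvPolynomial.supported F (Set.range (Sum.inl : X → X ⊕ Y ⊕ Z)) ∨
      ∃ (j : Z) (p' p'' : MvPolynomial (X ⊕ Y ⊕ Z) F),
        p' ∈ MvPolynomial.supported F (Set.range (Sum.inl : X → X ⊕ Y ⊕ Z)) ∧
        p'' ∈ MvPolynomial.supported F (Set.range (Sum.inl : X → X ⊕ Y ⊕ Z)) ∧
        p = p' + MvPolynomial.X (Sum.inr (Sum.inr j)) * p'')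
    -- P₁ is supported on the Y- and Z-variables
    (hP₁supp : ∀ q ∈ P₁, q ∈ MvPolynomial.supported F
      (Set.range ((Sum.inr ∘ Sum.inl) : Y → X ⊕ Y ⊕ Z) ∪
        Set.range ((Sum.inr ∘ Sum.inr) : Z → X ⊕ Y ⊕ Z)))
    (w : ℕ) (σ : Fin (Fintype.card (X ⊕ Y ⊕ Z)) ≃ (X ⊕ Y ⊕ Z))
    -- the X-variables precede all other variables in σ
    (hσ : ∀ k : Fin (Fintype.card (X ⊕ Y ⊕ Z)), (k : ℕ) < Fintype.card X ↔ ∃ x : X, σ k = Sum.inl x)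
    (a b : MvPolynomial (X ⊕ Y ⊕ Z) F → MvPolynomial (X ⊕ Y ⊕ Z) F)
    (ha : ∀ p ∈ P₀, ROABP σ w (a p))
    (hb : ∀ q ∈ P₁, ROABP σ w (b q))
    (hrefut : (∑ p ∈ P₀, a p * p) + (∑ q ∈ P₁, b q * q) = 1) :
    ∃ SP : SpanProgram F Z (MvPolynomial (X ⊕ Y ⊕ Z) F),
      SP.size ≤ 2 * w * P₀.card ∧
      -- SP computes an interpolant for (P₀, P₁):
      (∀ α : Z → Bool,
        (∃ x : X → Bool, ∀ p ∈ P₀,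
          MvPolynomial.eval
            (Sum.elim (fun v => boolToField F (x v))
              (Sum.elim (fun _ : Y => (0 : F)) (fun i => boolToField F (α i)))) p = 0) →
        ¬ SP.accepts α) ∧
      (∀ α : Z → Bool,
        (∃ y : Y → Bool, ∀ q ∈ P₁,
          MvPolynomial.eval
            (Sum.elim (fun _ : X => (0 : F))
              (Sum.elim (fun v => boolToField F (y v)) (fun i => boolToField F (α i)))) q = 0) →
        SP.accepts α) :=
  stmt_1_general F X Y Z P₀ P₁ hP₀nf hP₁supp w σ hσ a b ha hrefut
end

section
/- Let F be a field and X, Y, Z pairwise disjoint finite variable types; work in R = MvPolynomial (X ⊕ Y ⊕ Z) F. Let P₀ be a finite set of polynomials in MvPolynomial.supported F (X ∪ Z) that is in monotone z-normal form, and let P₁ be a finite set of polynomials in MvPolynomial.supported F (Y ∪ Z). Suppose there exist polynomials (a_p)_{p ∈ P₀} and (b_q)_{q ∈ P₁} in R, each computed by a width-w roABP in a variable order σ in which the X-variables precede all others, such that Σ_{p ∈ P₀} a_p · p + Σ_{q ∈ P₁} b_q · q = 1. Then there exists a monotone span program over Boolean variables indexed by Z, with vectors in R, of size at most 2·w·|P₀|,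 that computes an interpolant for (P₀, P₁). -/
/-!
Write each `p ∈ P₀` as `ℓ_p · h_p` with `ℓ_p` a positive literal or `1` and `h_p` an
`X`-polynomial, and split the roABP of `a_p` after the `X`-variables:
`a_p = ∑ᵢ A_{p,i} B_{p,i}` with `A_{p,i}` an `X`-polynomial and `B_{p,i}` free of `X`.
The span program has, for every `(p, i)`, a row labelled `ℓ_p` with vector `A_{p,i} h_p`, and
target `1`. If `x` satisfies `P₀` at `α`, evaluation at `(x, α)` kills the vectors of all active
rows but not `1`. If `y` satisfies `P₁` at `α`, substituting `(y, α)` for the `Y`- and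
`Z`-variables in the refutation kills `∑ b_q q`, fixes `A_{p,i}` and `h_p`, and turns `B_{p,i}`
and `ℓ_p` into constants; this writes `1` as a combination of the vectors of active rows.
-/

open MvPolynomial Finset

namespace MvPolynomial

variable {R V : Type*} [CommSemiring R] {s : Set V} {p : MvPolynomial V R}

theorem algHom_apply_eq_of_mem_supported {A : Type*} [Semiring A] [Algebra R A]
    {f g : MvPolynomial V R →ₐ[R] A} (hp : p ∈ supported R s)
    (h : ∀ v ∈ s, f (X v) = g (X v)) : f p = g p :=
  AlgHom.eqOn_adjoin_iff.mpr (Set.forall_mem_image.mpr h) hp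

open Classical in
noncomputable def substOutside (s : Set V) (c : V → R) :
    MvPolynomial V R →ₐ[R] MvPolynomial V R :=
  aeval fun v => if v ∈ s then X v else C (c v)

variable {c : V → R}

theorem substOutside_of_mem_supported (hp : p ∈ supported R s) : substOutside s c p = p :=
  algHom_apply_eq_of_mem_supported (g := AlgHom.id R _) hp fun v hv => by
    simp [substOutside, hv]

theorem substOutside_of_mem_supported_compl (hp : p ∈ supported R sᶜ) :
    substOutside s c p = C (eval c p) := by
  rw [← coe_aeval_eq_eval, ← algebraMap_eq]
  exact algHom_apply_eq_of_mem_supported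
    (g := (Algebra.ofId R (MvPolynomial V R)).comp (aeval c)) hp fun v hv => by
      simp [substOutside, Set.notMem_of_mem_compl hv]

theorem substOutside_sum_mul_mul {ι : Type*} [Fintype ι] {A B : ι → MvPolynomial V R}
    {l h : MvPolynomial V R} (hA : ∀ i, A i ∈ supported R s) (hB : ∀ i, B i ∈ supported R sᶜ)
    (hl : l ∈ supported R sᶜ) (hh : h ∈ supported R s) :
    substOutside s c ((∑ i, A i * B i) * (l * h)) = ∑ i, (eval c (B i) * eval c l) • (A i * h) := by
  simp only [map_mul, map_sum, substOutside_of_mem_supported (hA _),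
    substOutside_of_mem_supported hh, substOutside_of_mem_supported_compl (hB _),
    substOutside_of_mem_supported_compl hl, sum_mul, smul_eq_C_mul]
  exact sum_congr rfl fun i _ => by ring

end MvPolynomial

section ROABP

variable {F V : Type} [Field F] [Fintype V] {n w : ℕ} {σ : Fin n ≃ V}

theorem ROABP.exists_eq_sum_mul {f : MvPolynomial V F} (hf : ROABP σ w f) {s : Set V} {m : ℕ}
    (hs : ∀ k : Fin n, (k : ℕ) < m ↔ σ k ∈ s) :
    ∃ A B : Fin w → MvPolynomial V F, (∀ i, A i ∈ supported F s) ∧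
      (∀ i, B i ∈ supported F sᶜ) ∧ f = ∑ i, A i * B i := by
  obtain ⟨hw, M, hM, rfl⟩ := hf
  have hM' : ∀ k t, σ k ∈ t → M k ∈ (supported F t).matrix := fun k t hk i j =>
    supported_mono (Set.singleton_subset_iff.mpr hk) (hM k i j)
  have hpre : ((List.ofFn M).take m).prod ∈ (supported F s).matrix := by
    refine list_prod_mem fun N hN => ?_
    obtain ⟨k, hk, rfl⟩ := List.mem_iff_getElem.mp hN
    simp only [List.length_take, List.length_ofFn, lt_min_iff] at hk
    simpa using hM' ⟨k, hk.2⟩ s ((hs _).mp hk.1)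
  have hsuf : ((List.ofFn M).drop m).prod ∈ (supported F sᶜ).matrix := by
    refine list_prod_mem fun N hN => ?_
    obtain ⟨k, hk, rfl⟩ := List.mem_iff_getElem.mp hN
    simp only [List.length_drop, List.length_ofFn] at hk
    simpa using hM' ⟨m + k, by omega⟩ sᶜ (mt (hs _).mpr (by simp))
  refine ⟨fun i => ((List.ofFn M).take m).prod ⟨0, hw⟩ i,
    fun i => ((List.ofFn M).drop m).prod i ⟨0, hw⟩, fun i => hpre _ _, fun i => hsuf _ _, ?_⟩
  rw [← Matrix.mul_apply, ← List.prod_append, List.take_append_drop]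

end ROABP

namespace SPLabel

variable {F V Z : Type} [Field F]

noncomputable def toMvPolynomial (ι : Z → V) : SPLabel Z → MvPolynomial V F
  | pos i => X (ι i)
  | neg i => 1 - X (ι i)
  | one => 1

theorem toMvPolynomial_mem_supported (ι : Z → V) (l : SPLabel Z) :
    (l.toMvPolynomial ι : MvPolynomial V F) ∈ supported F (Set.range ι) := by
  have hX : ∀ i, (X (ι i) : MvPolynomial V F) ∈ supported F (Set.range ι) := fun i =>
    X_mem_supported.mpr ⟨i, rfl⟩
  cases l with
  | pos i => exact hX i
  | neg i => exact sub_mem (one_mem _) (hX i)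
  | one => exact one_mem _

theorem eval_toMvPolynomial {ι : Z → V} {c : V → F} {α : Z → Bool}
    (hc : ∀ i, c (ι i) = boolToField F (α i)) (l : SPLabel Z) :
    eval c (l.toMvPolynomial ι) = boolToField F (l.evalb α) := by
  cases l with
  | pos i => simp [toMvPolynomial, evalb, hc]
  | neg i => cases h : α i <;> simp [toMvPolynomial, evalb, boolToField, hc, h]
  | one => simp [toMvPolynomial, evalb, boolToField]

theorem eval_eq_zero_of_eval_toMvPolynomial_mul {ι : Z → V} {c : V → F} {α : Z → Bool}
    (hc : ∀ i, c (ι i) = boolToField F (α i)) {l : SPLabel Z} (hl : l.evalb α = true)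
    {h : MvPolynomial V F} (hlh : eval c (l.toMvPolynomial ι * h) = 0) : eval c h = 0 := by
  simpa [eval_toMvPolynomial hc, hl, boolToField] using hlh

theorem exists_eq_toMvPolynomial_mul {ι : Z → V} {s : Set V} {p : MvPolynomial V F}
    (hp : p ∈ supported F s ∨ ∃ j p'', p'' ∈ supported F s ∧ p = X (ι j) * p'') :
    ∃ (l : SPLabel Z) (h : MvPolynomial V F), (∀ i, l ≠ neg i) ∧ h ∈ supported F s ∧
      p = l.toMvPolynomial ι * h := by
  rcases hp with hp | ⟨j, p'', hp'', rfl⟩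
  · exact ⟨one, p, fun _ => nofun, hp, (one_mul p).symm⟩
  · exact ⟨pos j, p'', fun _ => nofun, hp'', rfl⟩

end SPLabel

namespace SpanProgram

variable {F Z V₀ : Type} [Field F] [AddCommGroup V₀] [Module F V₀]
  (P : SpanProgram F Z V₀) {α : Z → Bool}

theorem not_accepts_of_linearMap_s2 {W : Type} [AddCommGroup W] [Module F W] (f : V₀ →ₗ[F] W)
    (ht : f P.target ≠ 0) (hv : ∀ s, (P.label s).evalb α = true → f (P.vec s) = 0) :
    ¬ P.accepts α := by
  intro h
  refine ht ((Submodule.span_le (p := LinearMap.ker f)).mpr ?_ h)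
  rintro _ ⟨s, hs, rfl⟩
  exact hv s hs

theorem accepts_of_eq_sum (T : Finset P.S) (c : P.S → F)
    (ht : P.target = ∑ s ∈ T, c s • P.vec s)
    (hc : ∀ s, (P.label s).evalb α = false → c s = 0) : P.accepts α := by
  rw [accepts, ht]
  refine Submodule.sum_mem _ fun s _ => ?_
  cases hs : (P.label s).evalb α
  · simp [hc s hs]
  · exact Submodule.smul_mem _ _ (Submodule.subset_span ⟨s, hs, rfl⟩)

end SpanProgram

theorem stmt_2_general (F : Type) [Field F]
    (X Y Z : Type) [Fintype X] [Fintype Y] [Fintype Z]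
    (P₀ P₁ : Finset (MvPolynomial (X ⊕ Y ⊕ Z) F))
    -- P₀ is in monotone z-normal form
    (hP₀nf : ∀ p ∈ P₀,
      p ∈ MvPolynomial.supported F (Set.range (Sum.inl : X → X ⊕ Y ⊕ Z)) ∨
      ∃ (j : Z) (p'' : MvPolynomial (X ⊕ Y ⊕ Z) F),
        p'' ∈ MvPolynomial.supported F (Set.range (Sum.inl : X → X ⊕ Y ⊕ Z)) ∧
        p = MvPolynomial.X (Sum.inr (Sum.inr j)) * p'')
    -- P₁ is supported on the Y- and Z-variables
    (hP₁supp : ∀ q ∈ P₁, q ∈ MvPolynomial.supported F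
      (Set.range ((Sum.inr ∘ Sum.inl) : Y → X ⊕ Y ⊕ Z) ∪
        Set.range ((Sum.inr ∘ Sum.inr) : Z → X ⊕ Y ⊕ Z)))
    (w : ℕ) (σ : Fin (Fintype.card (X ⊕ Y ⊕ Z)) ≃ (X ⊕ Y ⊕ Z))
    -- the X-variables precede all other variables in σ
    (hσ : ∀ k : Fin (Fintype.card (X ⊕ Y ⊕ Z)), (k : ℕ) < Fintype.card X ↔ ∃ x : X, σ k = Sum.inl x)
    (a b : MvPolynomial (X ⊕ Y ⊕ Z) F → MvPolynomial (X ⊕ Y ⊕ Z) F)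
    (ha : ∀ p ∈ P₀, ROABP σ w (a p))
    (hrefut : (∑ p ∈ P₀, a p * p) + (∑ q ∈ P₁, b q * q) = 1) :
    ∃ SP : SpanProgram F Z (MvPolynomial (X ⊕ Y ⊕ Z) F),
      SP.size ≤ 2 * w * P₀.card ∧
      SP.IsMonotone ∧
      -- SP computes an interpolant for (P₀, P₁):
      (∀ α : Z → Bool,
        (∃ x : X → Bool, ∀ p ∈ P₀,
          MvPolynomial.eval
            (Sum.elim (fun v => boolToField F (x v))
              (Sum.elim (fun _ : Y => (0 : F)) (fun i => boolToField F (α i)))) p = 0) →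
        ¬ SP.accepts α) ∧
      (∀ α : Z → Bool,
        (∃ y : Y → Bool, ∀ q ∈ P₁,
          MvPolynomial.eval
            (Sum.elim (fun _ : X => (0 : F))
              (Sum.elim (fun v => boolToField F (y v)) (fun i => boolToField F (α i)))) q = 0) →
        SP.accepts α) := by
  classical
  choose lab h hlab hh hp using fun p : P₀ => SPLabel.exists_eq_toMvPolynomial_mul (hP₀nf p p.2)
  choose A B hA hB hAB using fun p : P₀ => (ha p p.2).exists_eq_sum_mul
    (s := Set.range Sum.inl) fun k => (hσ k).trans (exists_congr fun _ => eq_comm)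
  refine ⟨⟨P₀ × Fin w, inferInstance, fun t => lab t.1, fun t => A t.1 t.2 * h t.1, 1⟩,
    ?_, fun t => hlab t.1, ?_, ?_⟩
  · simp only [SpanProgram.size, Fintype.card_prod, Fintype.card_coe, Fintype.card_fin]
    nlinarith
  · rintro α ⟨x, hx⟩
    set pt : X ⊕ Y ⊕ Z → F := Sum.elim (fun v => boolToField F (x v))
      (Sum.elim (fun _ => 0) fun i => boolToField F (α i))
    refine SpanProgram.not_accepts_of_linearMap_s2 _ (aeval pt).toLinearMap (by simp) fun t ht => ?_
    have hh0 := SPLabel.eval_eq_zero_of_eval_toMvPolynomial_mul (c := pt) (fun _ => rfl) ht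
      (hp t.1 ▸ hx _ t.1.2)
    simp [hh0]
  · rintro α ⟨y, hy⟩
    set pt : X ⊕ Y ⊕ Z → F := Sum.elim (fun _ => 0)
      (Sum.elim (fun v => boolToField F (y v)) fun i => boolToField F (α i))
    have hP₁ : ∀ q ∈ P₁, substOutside (Set.range Sum.inl) pt (b q * q) = 0 := fun q hq => by
      rw [map_mul, substOutside_of_mem_supported_compl (supported_mono ?_ (hP₁supp q hq)), hy q hq,
        C_0, mul_zero]
      rintro _ (⟨_, rfl⟩ | ⟨_, rfl⟩) <;> simp
    have hE := congrArg (substOutside (Set.range Sum.inl) pt) hrefut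
    rw [map_add, map_sum, map_sum, sum_eq_zero hP₁, add_zero, map_one, ← sum_attach] at hE
    refine SpanProgram.accepts_of_eq_sum _ univ
      (fun t => eval pt (B t.1 t.2) * boolToField F ((lab t.1).evalb α)) ?_ fun t ht => by
        simp [ht, boolToField]
    dsimp only
    rw [← hE, Fintype.sum_prod_type, univ_eq_attach]
    refine sum_congr rfl fun p _ => ?_
    have hl : (lab p).toMvPolynomial (fun j => Sum.inr (Sum.inr j)) ∈
        supported F (Set.range (Sum.inl : X → X ⊕ Y ⊕ Z))ᶜ :=
      supported_mono (by rintro _ ⟨_, rfl⟩; simp) (SPLabel.toMvPolynomial_mem_supported _ _)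
    rw [hAB p, hp p, substOutside_sum_mul_mul (hA p) (hB p) hl (hh p),
      SPLabel.eval_toMvPolynomial (c := pt) (α := α) (fun _ => rfl)]

/-- Monotone feasible interpolation for roABP-IPS_LIN: from a width-$w$
roABP-IPS_LIN refutation of $P_0 ∪ P_1$, in a variable order where the $X$-variables
come first and with $P_0$ in monotone $z$-normal form, one can extract a *monotone*
span program of size at most $2·w·|P_0|$ computing an interpolant for $(P_0, P_1)$. -/
theorem stmt_2 (F : Type) [Field F]
    (X Y Z : Type) [Fintype X] [Fintype Y] [Fintype Z]
    (P₀ P₁ : Finset (MvPolynomial (X ⊕ Y ⊕ Z) F))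
    -- P₀ is supported on the X- and Z-variables
    (hP₀supp : ∀ p ∈ P₀, p ∈ MvPolynomial.supported F
      (Set.range (Sum.inl : X → X ⊕ Y ⊕ Z) ∪
        Set.range ((Sum.inr ∘ Sum.inr) : Z → X ⊕ Y ⊕ Z)))
    -- P₀ is in monotone z-normal form
    (hP₀nf : ∀ p ∈ P₀,
      p ∈ MvPolynomial.supported F (Set.range (Sum.inl : X → X ⊕ Y ⊕ Z)) ∨
      ∃ (j : Z) (p'' : MvPolynomial (X ⊕ Y ⊕ Z) F),
        p'' ∈ MvPolynomial.supported F (Set.range (Sum.inl : X → X ⊕ Y ⊕ Z)) ∧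
        p = MvPolynomial.X (Sum.inr (Sum.inr j)) * p'')
    -- P₁ is supported on the Y- and Z-variables
    (hP₁supp : ∀ q ∈ P₁, q ∈ MvPolynomial.supported F
      (Set.range ((Sum.inr ∘ Sum.inl) : Y → X ⊕ Y ⊕ Z) ∪
        Set.range ((Sum.inr ∘ Sum.inr) : Z → X ⊕ Y ⊕ Z)))
    (w : ℕ) (σ : Fin (Fintype.card (X ⊕ Y ⊕ Z)) ≃ (X ⊕ Y ⊕ Z))
    -- the X-variables precede all other variables in σ
    (hσ : ∀ k : Fin (Fintype.card (X ⊕ Y ⊕ Z)), (k : ℕ) < Fintype.card X ↔ ∃ x : X, σ k = Sum.inl x)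
    (a b : MvPolynomial (X ⊕ Y ⊕ Z) F → MvPolynomial (X ⊕ Y ⊕ Z) F)
    (ha : ∀ p ∈ P₀, ROABP σ w (a p))
    (hb : ∀ q ∈ P₁, ROABP σ w (b q))
    (hrefut : (∑ p ∈ P₀, a p * p) + (∑ q ∈ P₁, b q * q) = 1) :
    ∃ SP : SpanProgram F Z (MvPolynomial (X ⊕ Y ⊕ Z) F),
      SP.size ≤ 2 * w * P₀.card ∧
      SP.IsMonotone ∧
      -- SP computes an interpolant for (P₀, P₁):
      (∀ α : Z → Bool,
        (∃ x : X → Bool, ∀ p ∈ P₀,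
          MvPolynomial.eval
            (Sum.elim (fun v => boolToField F (x v))
              (Sum.elim (fun _ : Y => (0 : F)) (fun i => boolToField F (α i)))) p = 0) →
        ¬ SP.accepts α) ∧
      (∀ α : Z → Bool,
        (∃ y : Y → Bool, ∀ q ∈ P₁,
          MvPolynomial.eval
            (Sum.elim (fun _ : X => (0 : F))
              (Sum.elim (fun v => boolToField F (y v)) (fun i => boolToField F (α i)))) q = 0) →
        SP.accepts α) :=
  stmt_2_general F X Y Z P₀ P₁ hP₀nf hP₁supp w σ hσ a b ha hrefut
end

section
/- Let F be a field, and X, Z disjoint finite variable types. Work in MvPolynomial (X ⊕ Z ⊕ Z) F, writing Z_i for the variables in the first Z-copy and W_i for the variables in the second Z-copy; for a polynomial p in the variables X ∪ {Z_i} let p* denote the polynomial obtained by renaming each Z_i to W_i. Let P be a finite set of polynomials in MvPolynomial.supported F (X ∪ {Z_i : i ∈ Z}), each of total degree at most d and with at most s monomials. Set P' := {p* : p ∈ P} ∪ {Z_i − W_i : i ∈ Z}. Then: (1) every element of P' either contains no Z_i-variable or has the form q + Z_i·q' with q, q' free of all Z_i-variables; (2) for every α : Z → {0,1}, there exists x :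 X → {0,1} making every p ∈ P vanish at (x, α) if and only if there exist x : X → {0,1} and w : Z → F making every element of P' vanish at (x, α, w); (3) for every p ∈ P there exist polynomials c_i (i ∈ Z), each with at most s·d monomials, such that p = p* + Σ_{i ∈ Z} c_i·(Z_i − W_i). -/
/-- The renaming that swaps the two copies of `Z` (sending each variable `Z_i`
to the corresponding fresh variable `W_i` and vice versa). -/
def swapZW {X Z : Type} : X ⊕ Z ⊕ Z → X ⊕ Z ⊕ Z :=
  Sum.elim Sum.inl (Sum.elim (Sum.inr ∘ Sum.inr) (Sum.inr ∘ Sum.inl))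

open MvPolynomial Finset

namespace MvPolynomial

section CommSemiring

variable {σ R : Type*} [CommSemiring R]

theorem card_support_mul_le (p q : MvPolynomial σ R) :
    #(p * q).support ≤ #p.support * #q.support := by
  classical
  exact (card_le_card (support_mul p q)).trans card_add_le

theorem card_support_monomial_mul_le (s : σ →₀ ℕ) (a : R) (p : MvPolynomial σ R) :
    #(monomial s a * p).support ≤ #p.support := by
  classical
  calc #(monomial s a * p).support ≤ #(monomial s a).support * #p.support :=
        card_support_mul_le _ _
    _ ≤ 1 * #p.support := by
        gcongr
        exact (card_le_card support_monomial_subset).trans (card_singleton _).le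
    _ = #p.support := one_mul _

theorem card_support_sum_le {ι : Type*} (s : Finset ι) (f : ι → MvPolynomial σ R) :
    #(∑ i ∈ s, f i).support ≤ ∑ i ∈ s, #(f i).support := by
  classical
  exact (card_le_card support_sum).trans card_biUnion_le

theorem eval_eq_of_mem_supported {s : Set σ} {p : MvPolynomial σ R} (hp : p ∈ supported R s)
    {g₁ g₂ : σ → R} (h : ∀ v ∈ s, g₁ v = g₂ v) : eval g₁ p = eval g₂ p :=
  eval₂Hom_congr' rfl (fun v hv _ => h v (mem_supported.mp hp hv)) rfl

theorem rename_mem_supported_image {τ : Type*} {s : Set σ} {p : MvPolynomial σ R}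
    (hp : p ∈ supported R s) (f : σ → τ) : rename f p ∈ supported R (f '' s) := by
  classical
  rw [mem_supported] at hp ⊢
  exact (coe_subset.mpr (vars_rename f p)).trans (by simpa using Set.image_mono hp)

end CommSemiring

variable {σ R : Type*} [CommRing R]

theorem exists_prod_X_pow_sub_prod_X_pow_eq_sum (f : σ → σ) (n : σ → ℕ) (T : Finset σ) :
    ∃ c : σ → MvPolynomial σ R, (∀ v, #(c v).support ≤ n v) ∧
      ∏ v ∈ T, X v ^ n v - ∏ v ∈ T, X (f v) ^ n v = ∑ v ∈ T, c v * (X v - X (f v)) := by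
  classical
  induction T using Finset.induction_on with
  | empty => exact ⟨0, fun _ => by simp, by simp⟩
  | @insert a T ha ih =>
    obtain ⟨c, hc, hT⟩ := ih
    set A := ∏ v ∈ T, (X v ^ n v : MvPolynomial σ R)
    set g := ∑ k ∈ range (n a), (X a : MvPolynomial σ R) ^ k * X (f a) ^ (n a - 1 - k)
    have hg : #g.support ≤ n a := by
      refine (card_support_sum_le _ _).trans ?_
      refine (sum_le_sum (g := fun _ => 1) fun k _ => ?_).trans (by simp)
      rw [X_pow_eq_monomial, X_pow_eq_monomial, monomial_mul]
      exact (card_le_card support_monomial_subset).trans (card_singleton _).le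
    refine ⟨Function.update (fun v => X (f a) ^ n a * c v) a (g * A), fun v => ?_, ?_⟩
    · rcases eq_or_ne v a with rfl | hv
      · rw [Function.update_self, mul_comm, show A = _ from prod_X_pow n T]
        exact (card_support_monomial_mul_le _ _ _).trans hg
      · rw [Function.update_of_ne hv, X_pow_eq_monomial]
        exact (card_support_monomial_mul_le _ _ _).trans (hc v)
    · have hrest : ∀ v ∈ T, Function.update (fun v => X (f a) ^ n a * c v) a (g * A) v *
          (X v - X (f v)) = X (f a) ^ n a * (c v * (X v - X (f v))) := fun v hv => by
        rw [Function.update_of_ne (ne_of_mem_of_not_mem hv ha), mul_assoc]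
      rw [prod_insert ha, prod_insert ha, sum_insert ha, Function.update_self, sum_congr rfl hrest,
        ← mul_sum, ← hT, mul_assoc, mul_comm A, ← mul_assoc, geom_sum₂_mul]
      ring

theorem exists_monomial_sub_rename_eq_sum (f : σ → σ) {T : Finset σ} {m : σ →₀ ℕ}
    (hm : m.support ⊆ T) (a : R) :
    ∃ c : σ → MvPolynomial σ R, (∀ v, #(c v).support ≤ m v) ∧
      monomial m a - rename f (monomial m a) = ∑ v ∈ T, c v * (X v - X (f v)) := by
  obtain ⟨c, hc, hT⟩ := exists_prod_X_pow_sub_prod_X_pow_eq_sum (R := R) f m T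
  have hmon : monomial m a = C a * ∏ v ∈ T, X v ^ m v := by
    rw [monomial_eq, Finsupp.prod_of_support_subset m hm _ fun _ _ => pow_zero _]
  refine ⟨fun v => C a * c v, fun v => (card_support_monomial_mul_le _ _ _).trans (hc v), ?_⟩
  simp only [hmon, map_mul, map_prod, map_pow, rename_C, rename_X, ← mul_sub, hT, mul_sum,
    mul_assoc]

theorem exists_sub_rename_eq_sum (f : σ → σ) {T : Finset σ} {p : MvPolynomial σ R}
    (hp : p.vars ⊆ T) :
    ∃ c : σ → MvPolynomial σ R, (∀ v, #(c v).support ≤ #p.support * p.degreeOf v) ∧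
      p - rename f p = ∑ v ∈ T, c v * (X v - X (f v)) := by
  classical
  have hsupp (m) (hm : m ∈ p.support) : m.support ⊆ T := fun v hv =>
    hp <| (mem_vars_iff_mem_support v).mpr ⟨m, hm, hv⟩
  choose! c hc hmon using fun m hm => exists_monomial_sub_rename_eq_sum f (hsupp m hm) (coeff m p)
  refine ⟨fun v => ∑ m ∈ p.support, c m v, fun v => ?_, ?_⟩
  · calc #(∑ m ∈ p.support, c m v).support ≤ ∑ m ∈ p.support, #(c m v).support :=
          card_support_sum_le _ _
      _ ≤ ∑ _m ∈ p.support, p.degreeOf v :=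
          sum_le_sum fun m hm => (hc m hm v).trans (monomial_le_degreeOf v hm)
      _ = #p.support * p.degreeOf v := sum_const_nat fun _ _ => rfl
  · conv_lhs => rw [p.as_sum, map_sum, ← sum_sub_distrib]
    rw [sum_congr rfl hmon, sum_comm]
    simp only [sum_mul]

end MvPolynomial

section SwapZW

variable {ι κ : Type}

theorem rename_swapZW_mem_supported {R : Type*} [CommSemiring R]
    {p : MvPolynomial (ι ⊕ κ ⊕ κ) R}
    (hp : p ∈ supported R (Set.range Sum.inl ∪ Set.range (Sum.inr ∘ Sum.inl))) :
    rename swapZW p ∈ supported R (Set.range Sum.inl ∪ Set.range (Sum.inr ∘ Sum.inr)) := by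
  have := rename_mem_supported_image hp swapZW
  rwa [Set.image_union, ← Set.range_comp, ← Set.range_comp] at this

theorem eval_rename_swapZW_of_mem_supported {R : Type*} [CommSemiring R]
    {p : MvPolynomial (ι ⊕ κ ⊕ κ) R}
    (hp : p ∈ supported R (Set.range Sum.inl ∪ Set.range (Sum.inr ∘ Sum.inl)))
    (x : ι → R) (z w w' : κ → R) :
    eval (Sum.elim x (Sum.elim z w)) (rename swapZW p) = eval (Sum.elim x (Sum.elim w w')) p := by
  rw [eval_rename]
  exact eval_eq_of_mem_supported hp (by rintro _ (⟨_, rfl⟩ | ⟨_, rfl⟩) <;> rfl)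

theorem exists_eq_rename_swapZW_add_sum {R : Type*} [CommRing R] [Fintype ι] [Fintype κ]
    {p : MvPolynomial (ι ⊕ κ ⊕ κ) R}
    (hp : p ∈ supported R (Set.range Sum.inl ∪ Set.range (Sum.inr ∘ Sum.inl))) :
    ∃ c : κ → MvPolynomial (ι ⊕ κ ⊕ κ) R,
      (∀ i, #(c i).support ≤ #p.support * p.totalDegree) ∧
      p = rename swapZW p + ∑ i, c i * (X (Sum.inr (Sum.inl i)) - X (Sum.inr (Sum.inr i))) := by
  obtain ⟨c, hc, hsub⟩ := exists_sub_rename_eq_sum (T := univ) swapZW (subset_univ p.vars)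
  have hW (i : κ) : c (Sum.inr (Sum.inr i)) = 0 := by
    have hi : Sum.inr (Sum.inr i) ∉ p.vars := fun h => by
      rcases mem_supported.mp hp h with ⟨_, h⟩ | ⟨_, h⟩ <;> simp at h
    rw [mem_vars_iff_degreeOf_ne_zero, not_not] at hi
    simpa [hi] using hc (Sum.inr (Sum.inr i))
  refine ⟨fun i => c (Sum.inr (Sum.inl i)),
    fun i => (hc _).trans (Nat.mul_le_mul_left _ (degreeOf_le_totalDegree _ _)), ?_⟩
  rw [← sub_eq_iff_eq_add', hsub, Fintype.sum_sum_type, Fintype.sum_sum_type]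
  simp [swapZW, hW]

end SwapZW

/-- Nonmonotone normal-form lemma: replacing each `Z_i` by a fresh
variable `W_i` and adding the axioms `Z_i − W_i` yields a set `P'` in `z`-normal form
that is equisatisfiable with `P`, and from which each `p ∈ P` has a derivation with
sparse coefficients. -/
theorem stmt_4 (F : Type) [Field F] (X Z : Type) [Fintype X] [Fintype Z]
    (P : Finset (MvPolynomial (X ⊕ Z ⊕ Z) F)) (d s : ℕ)
    -- each p ∈ P uses only the X-variables and the first Z-copy
    (hsupp : ∀ p ∈ P, p ∈ MvPolynomial.supported F
      (Set.range (Sum.inl : X → X ⊕ Z ⊕ Z) ∪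
        Set.range ((Sum.inr ∘ Sum.inl) : Z → X ⊕ Z ⊕ Z)))
    (hdeg : ∀ p ∈ P, p.totalDegree ≤ d)
    (hsparse : ∀ p ∈ P, p.support.card ≤ s) :
    -- (1) P' is in z-normal form:
    -- each p* contains no Z_i-variable,
    (∀ p ∈ P, MvPolynomial.rename swapZW p ∈ MvPolynomial.supported F
      (Set.range (Sum.inl : X → X ⊕ Z ⊕ Z) ∪
        Set.range ((Sum.inr ∘ Sum.inr) : Z → X ⊕ Z ⊕ Z))) ∧
    -- and each Z_i − W_i has the form q + Z_i · q' with q, q' free of Z-variables,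
    (∀ i : Z, ∃ q q' : MvPolynomial (X ⊕ Z ⊕ Z) F,
      q ∈ MvPolynomial.supported F
        (Set.range (Sum.inl : X → X ⊕ Z ⊕ Z) ∪
          Set.range ((Sum.inr ∘ Sum.inr) : Z → X ⊕ Z ⊕ Z)) ∧
      q' ∈ MvPolynomial.supported F
        (Set.range (Sum.inl : X → X ⊕ Z ⊕ Z) ∪
          Set.range ((Sum.inr ∘ Sum.inr) : Z → X ⊕ Z ⊕ Z)) ∧
      MvPolynomial.X (Sum.inr (Sum.inl i)) - MvPolynomial.X (Sum.inr (Sum.inr i))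
        = q + MvPolynomial.X (Sum.inr (Sum.inl i)) * q') ∧
    -- (2) equisatisfiability for every Boolean assignment α to the Z-variables:
    (∀ α : Z → Bool,
      (∃ x : X → Bool, ∀ p ∈ P,
        MvPolynomial.eval
          (Sum.elim (fun v => boolToField F (x v))
            (Sum.elim (fun i => boolToField F (α i)) (fun _ => (0 : F)))) p = 0) ↔
      (∃ (x : X → Bool) (wv : Z → F),
        (∀ p ∈ P,
          MvPolynomial.eval
            (Sum.elim (fun v => boolToField F (x v))
              (Sum.elim (fun i => boolToField F (α i)) wv))
            (MvPolynomial.rename swapZW p) = 0) ∧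
        (∀ i : Z,
          MvPolynomial.eval
            (Sum.elim (fun v => boolToField F (x v))
              (Sum.elim (fun i' => boolToField F (α i')) wv))
            (MvPolynomial.X (Sum.inr (Sum.inl i)) -
              MvPolynomial.X (Sum.inr (Sum.inr i))) = 0))) ∧
    -- (3) each p ∈ P is derivable from P' with coefficients of sparsity ≤ s·d:
    (∀ p ∈ P, ∃ c : Z → MvPolynomial (X ⊕ Z ⊕ Z) F,
      (∀ i, (c i).support.card ≤ s * d) ∧
      p = MvPolynomial.rename swapZW p +
        ∑ i : Z, c i *
          (MvPolynomial.X (Sum.inr (Sum.inl i)) -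
            MvPolynomial.X (Sum.inr (Sum.inr i)))) := by
  refine ⟨fun p hp => rename_swapZW_mem_supported (hsupp p hp), fun i => ?_, fun α => ?_,
    fun p hp => ?_⟩
  · exact ⟨-MvPolynomial.X (Sum.inr (Sum.inr i)), 1,
      neg_mem (X_mem_supported.mpr (Or.inr ⟨i, rfl⟩)), one_mem _, by ring⟩
  · constructor
    · rintro ⟨x, hx⟩
      refine ⟨x, fun i => boolToField F (α i), fun p hp => ?_, fun i => by simp⟩
      rw [eval_rename_swapZW_of_mem_supported (hsupp p hp) _ _ _ fun _ => 0]
      exact hx p hp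
    · rintro ⟨x, wv, hP', hW⟩
      obtain rfl : wv = fun i => boolToField F (α i) :=
        funext fun i => (sub_eq_zero.mp (by simpa using hW i)).symm
      refine ⟨x, fun p hp => ?_⟩
      rw [← eval_rename_swapZW_of_mem_supported (hsupp p hp) _ _ _ fun _ => 0]
      exact hP' p hp
  · obtain ⟨c, hc, hp'⟩ := exists_eq_rename_swapZW_add_sum (hsupp p hp)
    exact ⟨c, fun i => (hc i).trans (Nat.mul_le_mul (hsparse p hp) (hdeg p hp)), hp'⟩
end

section
/- Let F be a field, and X, Z disjoint finite variable types. Let P be a finite set of polynomials that is monotone in z: each p ∈ P has the form p = (∏_{i ∈ I_p} Z_i) · p'_p for a finite set I_p ⊆ Z and a polynomial p'_p ∈ MvPolynomial.supported F X. Introduce fresh auxiliary variables W_{p,i} for p ∈ P and i ∈ I_p, and set P' := {p'_p + Σ_{i ∈ I_p} W_{p,i} : p ∈ P with I_p ≠ ∅} ∪ {Z_i · W_{p,i} : p ∈ P, i ∈ I_p} ∪ {p'_p : p ∈ P with I_p = ∅}. Then: (1) every element of P' either contains no Z-variable or has the form Z_i · q with q free of all Z-variables (monotone z-normal form); (2)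 for every α : Z → {0,1}, there exists x : X → {0,1} making every p ∈ P vanish at (x, α) if and only if there exist x : X → {0,1} and field values w for the auxiliary variables making every element of P' vanish at (x, α, w); (3) for every p ∈ P the identity (∏_{i ∈ I_p} Z_i)·p'_p = (∏_{i ∈ I_p} Z_i)·(p'_p + Σ_{i ∈ I_p} W_{p,i}) − Σ_{i ∈ I_p} (∏_{j ∈ I_p, j ≠ i} Z_j)·(Z_i · W_{p,i}) holds. -/
/-- Monotone normal-form lemma: for a set `P` of polynomials
monotone in `z` (each of the form `(∏_{i ∈ I_p} Z_i) · p'_p`), the normalized set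
`P' = {p'_p + Σ_{i ∈ I_p} W_{p,i}} ∪ {Z_i·W_{p,i}} ∪ {p'_p : I_p = ∅}` is in monotone
`z`-normal form, is equisatisfiable with `P`, and each `p ∈ P` satisfies the stated
derivation identity. Here `P` is presented as a family indexed by a finite type `ι`,
and the fresh variables `W_{p,i}` are indexed by the type `(t : ι) × {i : Z // i ∈ I t}`. -/
theorem stmt_5 (F : Type) [Field F] (X Z ι : Type)
    [Fintype X] [Fintype Z] [Fintype ι] [DecidableEq Z]
    (I : ι → Finset Z)
    (p p' : ι → MvPolynomial (X ⊕ Z ⊕ ((t : ι) × {i : Z // i ∈ I t})) F)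
    -- each p'_t uses only the X-variables
    (hp' : ∀ t, p' t ∈ MvPolynomial.supported F
      (Set.range (Sum.inl : X → X ⊕ Z ⊕ ((t : ι) × {i : Z // i ∈ I t}))))
    -- P is monotone in z: p_t = (∏_{i ∈ I_t} Z_i) · p'_t
    (hp : ∀ t, p t =
      (∏ i ∈ I t, MvPolynomial.X (Sum.inr (Sum.inl i))) * p' t) :
    -- (1) P' is in monotone z-normal form:
    -- each p'_t + Σ_{i ∈ I_t} W_{t,i} contains no Z-variable,
    (∀ t, (p' t + ∑ i ∈ (I t).attach,
        MvPolynomial.X (Sum.inr (Sum.inr (⟨t, i⟩ : (t : ι) × {i : Z // i ∈ I t}))))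
      ∈ MvPolynomial.supported F
        (Set.range (Sum.inl : X → X ⊕ Z ⊕ ((t : ι) × {i : Z // i ∈ I t})) ∪
          Set.range (Sum.inr ∘ Sum.inr :
            ((t : ι) × {i : Z // i ∈ I t}) → X ⊕ Z ⊕ ((t : ι) × {i : Z // i ∈ I t})))) ∧
    -- and each Z_i·W_{t,i} is Z_i times a polynomial free of Z-variables,
    (∀ t, ∀ i : {i : Z // i ∈ I t},
      (MvPolynomial.X (Sum.inr (Sum.inr (⟨t, i⟩ : (t : ι) × {i : Z // i ∈ I t})))
        : MvPolynomial (X ⊕ Z ⊕ ((t : ι) × {i : Z // i ∈ I t})) F)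
      ∈ MvPolynomial.supported F
        (Set.range (Sum.inl : X → X ⊕ Z ⊕ ((t : ι) × {i : Z // i ∈ I t})) ∪
          Set.range (Sum.inr ∘ Sum.inr :
            ((t : ι) × {i : Z // i ∈ I t}) → X ⊕ Z ⊕ ((t : ι) × {i : Z // i ∈ I t})))) ∧
    -- (2) equisatisfiability for every Boolean assignment α to the Z-variables:
    (∀ α : Z → Bool,
      (∃ x : X → Bool, ∀ t,
        MvPolynomial.eval
          (Sum.elim (fun v => boolToField F (x v))
            (Sum.elim (fun i => boolToField F (α i)) (fun _ => (0 : F)))) (p t) = 0) ↔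
      (∃ (x : X → Bool) (wv : ((t : ι) × {i : Z // i ∈ I t}) → F),
        (∀ t, MvPolynomial.eval
          (Sum.elim (fun v => boolToField F (x v))
            (Sum.elim (fun i => boolToField F (α i)) wv))
          (p' t + ∑ i ∈ (I t).attach,
            MvPolynomial.X (Sum.inr (Sum.inr
              (⟨t, i⟩ : (t : ι) × {i : Z // i ∈ I t})))) = 0) ∧
        (∀ t, ∀ i ∈ (I t).attach, MvPolynomial.eval
          (Sum.elim (fun v => boolToField F (x v))
            (Sum.elim (fun i' => boolToField F (α i')) wv))
          (MvPolynomial.X (Sum.inr (Sum.inl i.1)) *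
            MvPolynomial.X (Sum.inr (Sum.inr
              (⟨t, i⟩ : (t : ι) × {i : Z // i ∈ I t})))) = 0))) ∧
    -- (3) the derivation identity:
    (∀ t,
      (∏ i ∈ I t, MvPolynomial.X (Sum.inr (Sum.inl i))) * p' t =
      (∏ i ∈ I t, MvPolynomial.X (Sum.inr (Sum.inl i))) *
        (p' t + ∑ i ∈ (I t).attach,
          MvPolynomial.X (Sum.inr (Sum.inr
            (⟨t, i⟩ : (t : ι) × {i : Z // i ∈ I t})))) -
      ∑ i ∈ (I t).attach,
        (∏ j ∈ (I t).erase i.1, MvPolynomial.X (Sum.inr (Sum.inl j))) *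
          (MvPolynomial.X (Sum.inr (Sum.inl i.1)) *
            MvPolynomial.X (Sum.inr (Sum.inr
              (⟨t, i⟩ : (t : ι) × {i : Z // i ∈ I t}))))) := by

  classical
  -- helper: eval of p' t depends only on the X-coordinates
  have key : ∀ t (g₁ g₂ : (X ⊕ Z ⊕ ((t : ι) × {i : Z // i ∈ I t})) → F),
      (∀ v : X, g₁ (Sum.inl v) = g₂ (Sum.inl v)) →
      MvPolynomial.eval g₁ (p' t) = MvPolynomial.eval g₂ (p' t) := by
    intro t g₁ g₂ hg
    have hv := (MvPolynomial.mem_supported.mp (hp' t))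
    apply MvPolynomial.eval₂Hom_congr' rfl _ rfl
    intro i hi _
    obtain ⟨v, rfl⟩ := hv hi
    exact hg v
  refine ⟨?_, ?_, ?_, ?_⟩
  · intro t
    refine Subalgebra.add_mem _ (MvPolynomial.supported_mono Set.subset_union_left (hp' t)) ?_
    refine Subalgebra.sum_mem _ fun i _ => ?_
    exact MvPolynomial.X_mem_supported.mpr (Or.inr ⟨⟨t, i⟩, rfl⟩)
  · intro t i
    exact MvPolynomial.X_mem_supported.mpr (Or.inr ⟨⟨t, i⟩, rfl⟩)
  · intro α
    constructor
    · rintro ⟨x, hx⟩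
      refine ⟨x, fun s =>
        if h : (∀ i ∈ I s.1, α i = true) then 0
        else if hi : s.2.1 ∈ (I s.1).toList.find? (fun i => α i = false) then
          - MvPolynomial.eval
            (Sum.elim (fun v => boolToField F (x v))
              (Sum.elim (fun i => boolToField F (α i)) (fun _ => (0 : F)))) (p' s.1)
        else 0, ?_, ?_⟩
      · intro t
        set g := Sum.elim (fun v => boolToField F (x v))
              (Sum.elim (fun i => boolToField F (α i)) (fun _ => (0 : F))) with hgdef
        set wv : ((t : ι) × {i : Z // i ∈ I t}) → F := fun s =>
          if h : (∀ i ∈ I s.1, α i = true) then 0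
          else if hi : s.2.1 ∈ (I s.1).toList.find? (fun i => α i = false) then
            - MvPolynomial.eval g (p' s.1)
          else 0 with hwdef
        set g' := Sum.elim (fun v => boolToField F (x v))
              (Sum.elim (fun i => boolToField F (α i)) wv) with hg'def
        have hpe : MvPolynomial.eval g' (p' t) = MvPolynomial.eval g (p' t) :=
          key t g' g (fun v => rfl)
        rw [map_add, hpe]
        by_cases h : ∀ i ∈ I t, α i = true
        · -- product is 1, so eval g (p' t) = 0; all w's are 0
          have := hx t
          rw [hp t, map_mul] at this
          have hprod : MvPolynomial.eval g (∏ i ∈ I t,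
              MvPolynomial.X (Sum.inr (Sum.inl i))
              : MvPolynomial (X ⊕ Z ⊕ ((t : ι) × {i : Z // i ∈ I t})) F) = 1 := by
            rw [map_prod]
            refine Finset.prod_eq_one fun i hi => ?_
            simp [hgdef, boolToField, h i hi]
          rw [hprod, one_mul] at this
          rw [this]
          simp only [map_sum, MvPolynomial.eval_X]
          rw [Finset.sum_eq_zero, add_zero]
          intro i _
          simp only [hg'def, Sum.elim_inr, hwdef]
          rw [dif_pos h]
        · -- find the witness i0 with α i0 = false
          obtain ⟨i0, hi0mem, hi0⟩ : ∃ i ∈ I t, α i = false := by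
            push_neg at h
            obtain ⟨i, hi, hne⟩ := h
            exact ⟨i, hi, by simpa using hne⟩
          obtain ⟨j0, hj0⟩ : ∃ j0, (I t).toList.find? (fun i => α i = false) = some j0 := by
            rcases hf : (I t).toList.find? (fun i => α i = false) with _ | j0
            · exfalso
              have := List.find?_eq_none.mp hf i0 (by simpa using hi0mem)
              simp [hi0] at this
            · exact ⟨j0, rfl⟩
          have hj0mem : j0 ∈ I t := by
            have := List.mem_of_find?_eq_some hj0
            simpa using this
          have hwval : ∀ i : {i : Z // i ∈ I t}, wv ⟨t, i⟩ =
              if i.1 = j0 then - MvPolynomial.eval g (p' t) else 0 := by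
            intro i
            simp only [hwdef]
            rw [dif_neg h]
            by_cases hij : i.1 = j0
            · rw [if_pos hij]
              rw [dif_pos (show _ ∈ _ by rw [hij, hj0]; rfl)]
            · rw [if_neg hij]
              rw [dif_neg (by
                rw [hj0]
                exact fun hc => hij (Option.some.inj hc).symm)]
          simp only [map_sum, MvPolynomial.eval_X, hg'def, Sum.elim_inr]
          rw [show ∑ i ∈ (I t).attach, wv ⟨t, i⟩ = - MvPolynomial.eval g (p' t) by
            rw [Finset.sum_congr rfl (fun i _ => hwval i)]
            rw [Finset.sum_eq_single_of_mem (⟨j0, hj0mem⟩ : {i : Z // i ∈ I t})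
              (Finset.mem_attach _ _) (fun b _ hb => if_neg fun hc => hb (Subtype.ext hc))]
            simp]
          ring
      · intro t i _
        set g := Sum.elim (fun v => boolToField F (x v))
              (Sum.elim (fun i => boolToField F (α i)) (fun _ => (0 : F)))
        rw [map_mul]
        simp only [MvPolynomial.eval_X, Sum.elim_inr, Sum.elim_inl]
        by_cases h : ∀ j ∈ I t, α j = true
        · rw [dif_pos h, mul_zero]
        · by_cases hj : i.1 ∈ (I t).toList.find? (fun j => decide (α j = false))
          · have hfind : (I t).toList.find? (fun j => decide (α j = false)) = some i.1 :=
              Option.mem_def.mp hj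
            have hfalse : α i.1 = false := by simpa using List.find?_some hfind
            simp [boolToField, hfalse]
          · rw [dif_neg h, dif_neg hj, mul_zero]
    · rintro ⟨x, wv, h1, h2⟩
      refine ⟨x, fun t => ?_⟩
      set g' := Sum.elim (fun v => boolToField F (x v))
            (Sum.elim (fun i => boolToField F (α i)) wv) with hg'def
      set g := Sum.elim (fun v => boolToField F (x v))
            (Sum.elim (fun i => boolToField F (α i)) (fun _ => (0 : F))) with hgdef
      rw [hp t, map_mul, map_prod]
      by_cases h : ∀ i ∈ I t, α i = true
      · have hw0 : ∀ i : {i : Z // i ∈ I t}, wv ⟨t, i⟩ = 0 := by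
          intro i
          have := h2 t i (Finset.mem_attach _ _)
          rw [map_mul] at this
          simp only [MvPolynomial.eval_X, hg'def, Sum.elim_inr, Sum.elim_inl] at this
          have hz : boolToField F (α i.1) = 1 := by simp [boolToField, h i.1 i.2]
          rw [hz, one_mul] at this
          simpa using this
        have := h1 t
        rw [map_add, map_sum] at this
        simp only [MvPolynomial.eval_X, hg'def, Sum.elim_inr] at this
        rw [Finset.sum_congr rfl (fun i _ => hw0 i), Finset.sum_const_zero, add_zero] at this
        have hpe : MvPolynomial.eval g (p' t) = MvPolynomial.eval g' (p' t) :=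
          key t g g' (fun v => rfl)
        rw [hpe, this, mul_zero]
      · push_neg at h
        obtain ⟨i0, hi0mem, hne⟩ := h
        have hfalse : α i0 = false := by simpa using hne
        rw [Finset.prod_eq_zero hi0mem (by simp [hgdef, boolToField, hfalse]), zero_mul]
  · intro t
    have : ∀ i ∈ (I t).attach,
        (∏ j ∈ (I t).erase i.1, MvPolynomial.X (Sum.inr (Sum.inl j))) *
          (MvPolynomial.X (Sum.inr (Sum.inl i.1)) *
            MvPolynomial.X (Sum.inr (Sum.inr
              (⟨t, i⟩ : (t : ι) × {i : Z // i ∈ I t})))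
            : MvPolynomial (X ⊕ Z ⊕ ((t : ι) × {i : Z // i ∈ I t})) F) =
        (∏ j ∈ I t, MvPolynomial.X (Sum.inr (Sum.inl j))) *
          MvPolynomial.X (Sum.inr (Sum.inr ⟨t, i⟩)) := by
      intro i _
      rw [← mul_assoc, Finset.prod_erase_mul _ _ i.2]
    rw [Finset.sum_congr rfl this, ← Finset.mul_sum, mul_add]
    ring
end

section
/- Let φ be an unsatisfiable CNF over variables x_1, …, x_N in which every clause has exactly three literals on three pairwise distinct variables. Then the lifted CNF Ψ = Φ₁ ∧ Φ₂ associated with φ is unsatisfiable: no Boolean assignment to the u-variables and v-variables satisfies all clauses of Φ₁ and Φ₂. -/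
set_option synthInstance.maxHeartbeats 1000000

/-- A triple of pairwise distinct indices in `Fin N` (given as an injective map). -/
abbrev LTriple (N : ℕ) := {T : Fin 3 → Fin N // Function.Injective T}

/-- The variables of the lifted CNF: `N` main variables `v_i` plus one selector
variable `u_{t,T}` for every clause index `t` and every triple `T` of distinct indices. -/
abbrev LVar (N M : ℕ) := Fin N ⊕ (Fin M × LTriple N)

instance (N M : ℕ) : DecidableEq (Finset (LVar N M × Bool)) :=
  Finset.decidableEq

/-- Compatibility of two selectors: the union of their associated partial maps
(`v_{T r} ↦ var(ℓ_{t,r})`) is a one-to-one partial function. -/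
def LCompatible {N M : ℕ} (ℓ : Fin M → Fin 3 → Fin N × Bool)
    (t : Fin M) (T : LTriple N) (t' : Fin M) (T' : LTriple N) : Prop :=
  ∀ r r' : Fin 3,
    (T.1 r = T'.1 r' → (ℓ t r).1 = (ℓ t' r').1) ∧
    ((ℓ t r).1 = (ℓ t' r').1 → T.1 r = T'.1 r')

instance {N M : ℕ} (ℓ : Fin M → Fin 3 → Fin N × Bool)
    (t : Fin M) (T : LTriple N) (t' : Fin M) (T' : LTriple N) :
    Decidable (LCompatible ℓ t T t' T') := by
  unfold LCompatible; infer_instance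

/-- The clauses of `Φ₁`: for each clause index `t` and triple `T`, the clause
`¬u_{t,T} ∨ v_{T 0}^{sign ℓ_{t,0}} ∨ v_{T 1}^{sign ℓ_{t,1}} ∨ v_{T 2}^{sign ℓ_{t,2}}`. -/
def PhiOne {N M : ℕ} (ℓ : Fin M → Fin 3 → Fin N × Bool) :
    Finset (Finset (LVar N M × Bool)) :=
  Finset.image (fun tT : Fin M × LTriple N =>
    insert ((Sum.inr tT : LVar N M), false)
      (Finset.image (fun r : Fin 3 =>
        ((Sum.inl (tT.2.1 r) : LVar N M), (ℓ tT.1 r).2)) Finset.univ))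
    Finset.univ

/-- The clauses of `Φ₂`: for each `t` the clause `∨_T u_{t,T}`; for each `t` and
distinct triples `T ≠ T'` the clause `¬u_{t,T} ∨ ¬u_{t,T'}`; and for each
incompatible pair of selectors the clause `¬u_{t,T} ∨ ¬u_{t',T'}`. -/
def PhiTwo {N M : ℕ} (ℓ : Fin M → Fin 3 → Fin N × Bool) :
    Finset (Finset (LVar N M × Bool)) :=
  (Finset.image (fun t : Fin M =>
      Finset.image (fun T : LTriple N =>
        ((Sum.inr (t, T) : LVar N M), true)) Finset.univ)
    Finset.univ)
  ∪
  (Finset.image (fun x : (Fin M × LTriple N) × (Fin M × LTriple N) =>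
      ({((Sum.inr x.1 : LVar N M), false), ((Sum.inr x.2 : LVar N M), false)} :
        Finset (LVar N M × Bool)))
    (Finset.univ.filter (fun x : (Fin M × LTriple N) × (Fin M × LTriple N) =>
      (x.1.1 = x.2.1 ∧ x.1.2 ≠ x.2.2) ∨
      ¬ LCompatible ℓ x.1.1 x.1.2 x.2.1 x.2.2)))

/-- The lifted CNF $Ψ = Φ₁ ∧ Φ₂$ of an unsatisfiable 3-CNF $φ$
(whose $t$-th clause consists of the three literals $ℓ_{t,0}, ℓ_{t,1}, ℓ_{t,2}$ on three
pairwise distinct variables) is unsatisfiable. -/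
theorem stmt_12 (N M : ℕ) (ℓ : Fin M → Fin 3 → Fin N × Bool)
    -- each clause of φ has its three literals on pairwise distinct variables
    (hdist : ∀ t : Fin M, Function.Injective fun r : Fin 3 => (ℓ t r).1)
    -- φ is unsatisfiable
    (hunsat : ¬ ∃ x : Fin N → Bool, ∀ t : Fin M, ∃ r : Fin 3, x (ℓ t r).1 = (ℓ t r).2) :
    -- Ψ = Φ₁ ∧ Φ₂ is unsatisfiable
    ¬ ∃ β : LVar N M → Bool,
        ∀ C ∈ PhiOne ℓ ∪ PhiTwo ℓ, ∃ l ∈ C, β l.1 = l.2 := by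
  rintro ⟨β, hβ⟩
  apply hunsat
  classical
  -- Step 1: for each clause t there is a selected triple
  have hsel : ∀ t : Fin M, ∃ T : LTriple N, β (Sum.inr (t, T)) = true := by
    intro t
    have hmem : (Finset.image (fun T : LTriple N =>
        ((Sum.inr (t, T) : LVar N M), true)) Finset.univ) ∈ PhiOne ℓ ∪ PhiTwo ℓ := by
      apply Finset.mem_union_right
      apply Finset.mem_union_left
      exact Finset.mem_image_of_mem _ (Finset.mem_univ t)
    obtain ⟨l, hl, hβl⟩ := hβ _ hmem
    simp only [Finset.mem_image, Finset.mem_univ, true_and] at hl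
    obtain ⟨T, rfl⟩ := hl
    exact ⟨T, hβl⟩
  choose sel hselspec using hsel
  -- Step 2: any two selected selectors are compatible
  have hcompat : ∀ (t : Fin M) (T : LTriple N) (t' : Fin M) (T' : LTriple N),
      β (Sum.inr (t, T)) = true → β (Sum.inr (t', T')) = true →
      LCompatible ℓ t T t' T' := by
    intro t T t' T' h1 h2
    by_contra hnc
    have hmem : ({((Sum.inr (t, T) : LVar N M), false),
        ((Sum.inr (t', T') : LVar N M), false)} : Finset (LVar N M × Bool))
        ∈ PhiOne ℓ ∪ PhiTwo ℓ := by
      apply Finset.mem_union_right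
      apply Finset.mem_union_right
      refine Finset.mem_image.2 ⟨((t, T), (t', T')), ?_, rfl⟩
      simp [hnc]
    obtain ⟨l, hl, hβl⟩ := hβ _ hmem
    simp only [Finset.mem_insert, Finset.mem_singleton] at hl
    rcases hl with rfl | rfl
    · rw [h1] at hβl; simp at hβl
    · rw [h2] at hβl; simp at hβl
  -- Step 3: define the assignment x
  set x : Fin N → Bool := fun n =>
    if h : ∃ q : (Fin M × LTriple N) × Fin 3,
        β (Sum.inr q.1) = true ∧ (ℓ q.1.1 q.2).1 = n
    then β (Sum.inl (h.choose.1.2.1 h.choose.2))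
    else false with hx
  have hxdef : ∀ (t : Fin M) (T : LTriple N) (r : Fin 3),
      β (Sum.inr (t, T)) = true → x ((ℓ t r).1) = β (Sum.inl (T.1 r)) := by
    intro t T r hT
    have hex : ∃ q : (Fin M × LTriple N) × Fin 3,
        β (Sum.inr q.1) = true ∧ (ℓ q.1.1 q.2).1 = (ℓ t r).1 := ⟨((t, T), r), hT, rfl⟩
    rw [hx]
    simp only [dif_pos hex]
    obtain ⟨hq1, hq2⟩ := hex.choose_spec
    have heq := (hcompat _ _ t T hq1 hT hex.choose.2 r).2 hq2
    rw [heq]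
  -- Step 4: x satisfies φ
  refine ⟨x, fun t => ?_⟩
  have hT := hselspec t
  have hmem : (insert ((Sum.inr (t, sel t) : LVar N M), false)
      (Finset.image (fun r : Fin 3 =>
        ((Sum.inl ((sel t).1 r) : LVar N M), (ℓ t r).2)) Finset.univ))
      ∈ PhiOne ℓ ∪ PhiTwo ℓ := by
    apply Finset.mem_union_left
    exact Finset.mem_image_of_mem _ (Finset.mem_univ (t, sel t))
  obtain ⟨l, hl, hβl⟩ := hβ _ hmem
  simp only [Finset.mem_insert, Finset.mem_image, Finset.mem_univ, true_and] at hl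
  rcases hl with rfl | ⟨r, rfl⟩
  · rw [hT] at hβl; simp at hβl
  · exact ⟨r, by rw [hxdef t (sel t) r hT]; exact hβl⟩
end

section
/- Let φ be an unsatisfiable CNF over variables x_1, …, x_N in which every clause has exactly three literals on three pairwise distinct variables, and let Ψ = Φ₁ ∧ Φ₂ be its lifted CNF. Let F be a field, let σ be any variable order on the variables of Ψ, let v_{j_1} < ⋯ < v_{j_N} be the order σ induces on the v-variables, and let τ be any bijection from {v_1, …, v_N} to {x_1, …, x_N}. If the standard translation of Ψ has an roABP-IPS_LIN refutation over F of width w in order σ, then the standard translation of φ has an roABP-IPS_LIN refutation over F of width at most w in the variable order τ(v_{j_1}) < τ(v_{j_2}) < ⋯ < τ(v_{j_N}). -/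
/-!
Substitute `v_i ↦ x_{τ i}` and set the selector `u_{t,T}` to `1` exactly when `T` is the
triple `τ⁻¹ ∘ var(ℓ_t)`, and to `0` otherwise. These triples are pairwise compatible and there
is one per clause, so the substitution satisfies every clause of `Φ₂` and every clause of `Φ₁`
except the selected ones, which become the clauses of `φ`; the Boolean axioms of the selectors
vanish. Each variable is sent to a constant or to a single `x`-variable, at a position depending
monotonically on its position in `σ`, so the matrices of an roABP can be multiplied together in
consecutive blocks, one block per `x`-variable, without increasing the width.
-/


set_option synthInstance.maxHeartbeats 1000000

/-- An roABP-IPS_LIN refutation of the family `f` of width `w` in order `σ`. -/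
def IPSLinRefutation {F : Type} [Field F] {V : Type} [Fintype V] {n : ℕ}
    (σ : Fin n ≃ V) (w : ℕ) {ι : Type} [Fintype ι]
    (f : ι → MvPolynomial V F) : Prop :=
  ∃ (g : ι → MvPolynomial V F) (h : V → MvPolynomial V F),
    (∀ i, ROABP σ w (g i)) ∧ (∀ v, ROABP σ w (h v)) ∧
    (∑ i, g i * f i) + (∑ v, h v * (MvPolynomial.X v ^ 2 - MvPolynomial.X v)) = 1

noncomputable def clausePoly {F : Type} [Field F] {V : Type} (C : Finset (V × Bool)) :
    MvPolynomial V F :=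
  ∏ l ∈ C, if l.2 then (1 - MvPolynomial.X l.1) else MvPolynomial.X l.1

open MvPolynomial

theorem List.prod_ofFn_eq_prod_ofFn_filter {A : Type*} [Monoid A] {n m : ℕ} (f : Fin n → A)
    {c : Fin n → Fin m} (hc : Monotone c) :
    (List.ofFn f).prod =
      (List.ofFn fun r => (((List.finRange n).filter fun k => c k = r).map f).prod).prod := by
  have hsplit : (List.finRange m).flatMap (fun r => (List.finRange n).filter (c · = r)) =
      List.finRange n := by
    refine List.Perm.eq_of_pairwise' ?_ (List.pairwise_lt_finRange n) ?_
    · refine List.pairwise_flatMap.2 ⟨fun r _ => (List.pairwise_lt_finRange n).filter _, ?_⟩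
      refine (List.pairwise_lt_finRange m).imp fun hrr' a ha b hb => ?_
      simp only [List.mem_filter, decide_eq_true_eq] at ha hb
      by_contra! hba
      exact (hb.2 ▸ ha.2 ▸ hrr').not_ge (hc hba)
    · refine (List.perm_ext_iff_of_nodup ?_ (List.nodup_finRange n)).2 fun k => by simp
      refine List.nodup_flatMap.2 ⟨fun r _ => (List.nodup_finRange n).filter _, ?_⟩
      refine (List.nodup_finRange m).pairwise_of_forall_ne fun r _ r' _ hrr' => ?_
      simp only [Function.onFun, List.disjoint_left, List.mem_filter, decide_eq_true_eq]
      rintro k ⟨-, rfl⟩ ⟨-, h⟩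
      exact hrr' h
  rw [List.ofFn_eq_map, List.ofFn_eq_map]
  conv_lhs => rw [← hsplit]
  simp only [List.flatMap_def, List.map_flatten, List.prod_flatten, List.map_map]
  rfl


theorem MvPolynomial.aeval_mem_of_mem_supported {F V W : Type*} [CommSemiring F]
    {s : Set V} {S : Subalgebra F (MvPolynomial W F)} {x : V → MvPolynomial W F}
    (hx : ∀ v ∈ s, x v ∈ S) {p : MvPolynomial V F} (hp : p ∈ supported F s) :
    aeval x p ∈ S := by
  have hmap : (supported F s).map (aeval x) ≤ S := by
    rw [supported_eq_adjoin_X, AlgHom.map_adjoin, Algebra.adjoin_le_iff]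
    rintro _ ⟨_, ⟨v, hv, rfl⟩, rfl⟩
    simpa using hx v hv
  exact hmap ⟨p, hp, rfl⟩

theorem Matrix.list_prod_apply_mem {R A : Type*} [CommSemiring R] [Semiring A] [Algebra R A]
    {w : ℕ} (S : Subalgebra R A) (L : List (Matrix (Fin w) (Fin w) A))
    (hL : ∀ B ∈ L, ∀ i j, B i j ∈ S) (i j : Fin w) : L.prod i j ∈ S := by
  refine List.prod_induction (fun B : Matrix (Fin w) (Fin w) A => ∀ i j, B i j ∈ S)
    (fun B C hB hC i j => ?_) (fun i j => ?_) hL i j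
  · rw [Matrix.mul_apply]
    exact Subalgebra.sum_mem _ fun k _ => mul_mem (hB i k) (hC k j)
  · rw [Matrix.one_apply]
    split_ifs
    exacts [one_mem S, zero_mem S]

section Substitution

variable {V W : Type} {n m : ℕ}

def RespectsOrder {F : Type} [CommSemiring F] (σ : Fin n ≃ V) (σ' : Fin m ≃ W)
    (x : V → MvPolynomial W F) : Prop :=
  ∃ c : Fin n → Fin m, Monotone c ∧ ∀ k, x (σ k) ∈ supported F {σ' (c k)}

variable {F : Type} [Field F] [Fintype V] [Fintype W]

theorem ROABP.aeval_of_respectsOrder {σ : Fin n ≃ V} {σ' : Fin m ≃ W}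
    {x : V → MvPolynomial W F} (hx : RespectsOrder σ σ' x) {w : ℕ} {g : MvPolynomial V F}
    (hg : ROABP σ w g) : ROABP σ' w (aeval x g) := by
  obtain ⟨c, hc, hxc⟩ := hx
  obtain ⟨hw, A, hA, rfl⟩ := hg
  set B : Fin n → Matrix (Fin w) (Fin w) (MvPolynomial W F) := fun k => (A k).map (aeval x)
  refine ⟨hw, fun r => (((List.finRange n).filter fun k => c k = r).map B).prod, ?_, ?_⟩
  · intro r
    refine Matrix.list_prod_apply_mem _ _ ?_
    simp only [List.mem_map, List.mem_filter, decide_eq_true_eq]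
    rintro _ ⟨k, ⟨-, rfl⟩, rfl⟩ i j
    exact aeval_mem_of_mem_supported (by simpa using hxc k) (hA k i j)
  · rw [← List.prod_ofFn_eq_prod_ofFn_filter B hc]
    have hB : List.ofFn B = (List.ofFn A).map (aeval x).mapMatrix := by
      simp [B, List.map_ofFn, Function.comp_def]
    rw [hB, ← map_list_prod, AlgHom.mapMatrix_apply, Matrix.map_apply]

theorem IPSLinRefutation.aeval_of_respectsOrder {σ : Fin n ≃ V} {σ' : Fin m ≃ W}
    {x : V → MvPolynomial W F} (hx : RespectsOrder σ σ' x)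
    {ι ι' : Type} [Fintype ι] [Fintype ι']
    {f : ι → MvPolynomial V F} {f' : ι' → MvPolynomial W F} {w : ℕ}
    (e : ι' → ι) (he : Function.Injective e) (hfe : ∀ t, aeval x (f (e t)) = f' t)
    (hf : ∀ i ∉ Set.range e, aeval x (f i) = 0)
    (κ : W → V) (hκ : Function.Injective κ) (hxκ : ∀ y, x (κ y) = X y)
    (hx_idem : ∀ v ∉ Set.range κ, x v ^ 2 = x v)
    (href : IPSLinRefutation σ w f) : IPSLinRefutation σ' w f' := by
  obtain ⟨g, h, hg, hh, hsum⟩ := href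
  refine ⟨fun t => aeval x (g (e t)), fun y => aeval x (h (κ y)),
    fun t => (hg _).aeval_of_respectsOrder hx, fun y => (hh _).aeval_of_respectsOrder hx, ?_⟩
  have hsum' := congrArg (aeval x) hsum
  simp only [map_add, map_sum, map_mul, map_sub, map_pow, aeval_X, map_one] at hsum'
  rw [← hsum']
  congr 1
  · refine Fintype.sum_of_injective e he _ _ (fun i hi => ?_) fun t => by rw [hfe]
    rw [hf i hi, mul_zero]
  · refine Fintype.sum_of_injective κ hκ _ _ (fun v hv => ?_) fun y => by rw [hxκ]
    rw [hx_idem v hv, sub_self, mul_zero]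

end Substitution

section Translation

variable {F : Type} [Field F] {V W : Type}

theorem aeval_clausePoly (x : V → MvPolynomial W F) (C : Finset (V × Bool)) :
    aeval x (clausePoly (F := F) C) = ∏ l ∈ C, if l.2 then 1 - x l.1 else x l.1 := by
  simp only [clausePoly, map_prod, apply_ite, map_sub, map_one, aeval_X]

theorem aeval_clausePoly_eq_zero {x : V → MvPolynomial W F} {C : Finset (V × Bool)}
    {l : V × Bool} (hl : l ∈ C) (hx : x l.1 = if l.2 then 1 else 0) :
    aeval x (clausePoly (F := F) C) = 0 := by
  rw [aeval_clausePoly]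
  refine Finset.prod_eq_zero hl ?_
  rcases l with ⟨v, _ | _⟩ <;> simp [hx]

end Translation

theorem StrictMono.exists_monotone_leftInverse {m n : ℕ} {p : Fin m → Fin n} (hp : StrictMono p)
    (hm : 0 < n → 0 < m) : ∃ c : Fin n → Fin m, Monotone c ∧ ∀ r, c (p r) = r := by
  classical
  -- `c k` is the index of the last `p r ≤ k`, and `0` if there is none
  refine ⟨fun k => ⟨(Finset.univ.filter (p · ≤ k)).card - 1, ?_⟩, fun k k' hkk' => ?_,
    fun r => ?_⟩
  · have hcard := Finset.card_filter_le Finset.univ (p · ≤ k)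
    rw [Finset.card_univ, Fintype.card_fin] at hcard
    have := hm k.pos
    omega
  · refine Fin.mk_le_mk.2 (Nat.sub_le_sub_right (Finset.card_le_card ?_) 1)
    exact Finset.monotone_filter_right _ fun r _ h => h.trans hkk'
  · have : Finset.univ.filter (p · ≤ p r) = Finset.Iic r := by
      ext r'
      simp [hp.le_iff_le]
    exact Fin.ext (by simp [this])

section Lifting

variable {N M : ℕ} (ℓ : Fin M → Fin 3 → Fin N × Bool)

theorem LVar.pos (v : LVar N M) : 0 < N :=
  v.elim Fin.pos fun a => (a.2.1 0).pos

def phiOneClause (a : Fin M × LTriple N) : Finset (LVar N M × Bool) :=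
  insert (Sum.inr a, false) (Finset.univ.image fun r => (Sum.inl (a.2.1 r), (ℓ a.1 r).2))

theorem phiOneClause_injective : Function.Injective (phiOneClause ℓ) := by
  intro a b hab
  have hmem : ((Sum.inr a : LVar N M), false) ∈ phiOneClause ℓ b :=
    hab ▸ Finset.mem_insert_self _ _
  simpa [phiOneClause] using hmem

noncomputable def liftSubst (F : Type) [Field F] (τ : Fin N ≃ Fin N) (S : Fin M → LTriple N) :
    LVar N M → MvPolynomial (Fin N) F :=
  Sum.elim (fun i => X (τ i)) fun a => if a.2 = S a.1 then 1 else 0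

def chosenTriple (hdist : ∀ t : Fin M, Function.Injective fun r : Fin 3 => (ℓ t r).1)
    (τ : Fin N ≃ Fin N) (t : Fin M) : LTriple N :=
  ⟨fun r => τ.symm (ℓ t r).1, τ.symm.injective.comp (hdist t)⟩

theorem respectsOrder_liftSubst {F : Type} [Field F] {n : ℕ} {σ : Fin n ≃ LVar N M}
    {j τ : Fin N ≃ Fin N} (hj : StrictMono fun r => σ.symm (Sum.inl (j r)))
    (S : Fin M → LTriple N) : RespectsOrder σ (j.trans τ) (liftSubst F τ S) := by
  obtain ⟨c, hc, hcj⟩ := hj.exists_monotone_leftInverse fun hn => (σ ⟨0, hn⟩).pos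
  refine ⟨c, hc, fun k => ?_⟩
  rcases hk : σ k with i | a
  · have hck : c k = j.symm i := by simpa [← hk] using hcj (j.symm i)
    simp [liftSubst, hck, X_mem_supported]
  · simp only [liftSubst, Sum.elim_inr]
    split_ifs
    exacts [one_mem _, zero_mem _]

theorem liftSubst_inr_sq {F : Type} [Field F] (τ : Fin N ≃ Fin N) (S : Fin M → LTriple N)
    (a : Fin M × LTriple N) : liftSubst F τ S (Sum.inr a) ^ 2 = liftSubst F τ S (Sum.inr a) := by
  simp only [liftSubst, Sum.elim_inr]
  split_ifs <;> simp

theorem chosenTriple_compatible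
    (hdist : ∀ t : Fin M, Function.Injective fun r : Fin 3 => (ℓ t r).1) (τ : Fin N ≃ Fin N)
    (t t' : Fin M) :
    LCompatible ℓ t (chosenTriple ℓ hdist τ t) t' (chosenTriple ℓ hdist τ t') :=
  fun r r' => by simp [chosenTriple]

theorem aeval_liftSubst_phiOneClause_chosenTriple {F : Type} [Field F]
    (hdist : ∀ t : Fin M, Function.Injective fun r : Fin 3 => (ℓ t r).1) (τ : Fin N ≃ Fin N)
    (t : Fin M) :
    aeval (liftSubst F τ (chosenTriple ℓ hdist τ))
        (clausePoly (F := F) (phiOneClause ℓ (t, chosenTriple ℓ hdist τ t))) =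
      clausePoly (F := F) (Finset.univ.image (ℓ t)) := by
  rw [aeval_clausePoly, phiOneClause, Finset.prod_insert (by simp),
    Finset.prod_image fun a _ b _ h =>
      (chosenTriple ℓ hdist τ t).2 (Sum.inl_injective (congrArg Prod.fst h)),
    clausePoly, Finset.prod_image fun a _ b _ h => hdist t (congrArg Prod.fst h)]
  simp [liftSubst, chosenTriple]

theorem aeval_liftSubst_clausePoly_eq_zero {F : Type} [Field F] (τ : Fin N ≃ Fin N)
    {S : Fin M → LTriple N} (hS : ∀ t t', LCompatible ℓ t (S t) t' (S t'))
    {C : Finset (LVar N M × Bool)} (hC : C ∈ PhiOne ℓ ∪ PhiTwo ℓ)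
    (hne : ∀ t, phiOneClause ℓ (t, S t) ≠ C) :
    aeval (liftSubst F τ S) (clausePoly (F := F) C) = 0 := by
  rcases Finset.mem_union.1 hC with hC | hC
  · obtain ⟨⟨t, T⟩, -, rfl⟩ := Finset.mem_image.1 hC
    have hT : T ≠ S t := by
      rintro rfl
      exact hne t rfl
    exact aeval_clausePoly_eq_zero (Finset.mem_insert_self _ _) (by simp [liftSubst, hT])
  simp only [PhiTwo, Finset.mem_union, Finset.mem_image, Finset.mem_filter, Finset.mem_univ,
    true_and] at hC
  rcases hC with ⟨t, rfl⟩ | ⟨⟨a, b⟩, hab, rfl⟩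
  · exact aeval_clausePoly_eq_zero (l := (Sum.inr (t, S t), true)) (by simp) (by simp [liftSubst])
  have hunsel : a.2 ≠ S a.1 ∨ b.2 ≠ S b.1 := by
    by_contra! h
    rw [h.1, h.2] at hab
    rcases hab with ⟨hab, hne⟩ | hinc
    · exact hne (hab ▸ rfl)
    · exact hinc (hS _ _)
  rcases hunsel with h | h
  · exact aeval_clausePoly_eq_zero (l := (Sum.inr a, false)) (by simp) (by simp [liftSubst, h])
  · exact aeval_clausePoly_eq_zero (l := (Sum.inr b, false)) (by simp) (by simp [liftSubst, h])

end Lifting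

theorem stmt_13_general (N M : ℕ) (ℓ : Fin M → Fin 3 → Fin N × Bool)
    -- each clause of φ has its three literals on pairwise distinct variables
    (hdist : ∀ t : Fin M, Function.Injective fun r : Fin 3 => (ℓ t r).1)
    (F : Type) [Field F]
    (σ : Fin (Fintype.card (LVar N M)) ≃ LVar N M)
    -- j enumerates the v-variables in the order induced by σ
    (j : Fin N ≃ Fin N)
    (hj : StrictMono fun r : Fin N =>
      (σ.symm (Sum.inl (j r)) : Fin (Fintype.card (LVar N M))))
    -- τ is an arbitrary bijection from the v-variables to the x-variables
    (τ : Fin N ≃ Fin N)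
    (w : ℕ)
    (href : IPSLinRefutation σ w
      (fun C : ↥(PhiOne ℓ ∪ PhiTwo ℓ) => clausePoly (F := F) C.1)) :
    ∃ w' ≤ w, IPSLinRefutation (j.trans τ) w'
      (fun t : Fin M =>
        clausePoly (F := F)
          (Finset.image (fun r : Fin 3 => ℓ t r) Finset.univ)) := by
  set S := chosenTriple ℓ hdist τ
  have hmem (t : Fin M) : phiOneClause ℓ (t, S t) ∈ PhiOne ℓ ∪ PhiTwo ℓ :=
    Finset.mem_union_left _ (Finset.mem_image_of_mem _ (Finset.mem_univ _))
  refine ⟨w, le_rfl, href.aeval_of_respectsOrder (respectsOrder_liftSubst hj S)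
    (fun t => ⟨_, hmem t⟩) ?_ ?_ ?_ (Sum.inl ∘ τ.symm) ?_ ?_ ?_⟩
  · exact fun t t' h => (Prod.ext_iff.1 (phiOneClause_injective ℓ (congrArg Subtype.val h))).1
  · exact aeval_liftSubst_phiOneClause_chosenTriple ℓ hdist τ
  · exact fun C hC => aeval_liftSubst_clausePoly_eq_zero ℓ τ
      (chosenTriple_compatible ℓ hdist τ) C.2 fun t h => hC ⟨t, Subtype.ext h⟩
  · exact Sum.inl_injective.comp τ.symm.injective
  · intro y
    simp only [Function.comp_apply, liftSubst, Sum.elim_inl, Equiv.apply_symm_apply]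
  · rintro (i | a) hv
    · exact absurd ⟨τ i, by simp⟩ hv
    · exact liftSubst_inr_sq τ S a

/-- Any width-$w$ roABP-IPS_LIN refutation of the standard
translation of the lifted CNF $Ψ = Φ₁ ∧ Φ₂$, in an arbitrary variable order $σ$,
yields a width-$≤ w$ roABP-IPS_LIN refutation of the standard translation of the
original 3-CNF $φ$ in the variable order $τ(v_{j_1}) < ⋯ < τ(v_{j_N})$, where
$v_{j_1} < ⋯ < v_{j_N}$ is the order $σ$ induces on the $v$-variables and $τ$ is
any bijection from the $v$-variables to the $x$-variables. -/
theorem stmt_13 (N M : ℕ) (ℓ : Fin M → Fin 3 → Fin N × Bool)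
    -- each clause of φ has its three literals on pairwise distinct variables
    (hdist : ∀ t : Fin M, Function.Injective fun r : Fin 3 => (ℓ t r).1)
    -- φ is unsatisfiable
    (hunsat : ¬ ∃ x : Fin N → Bool, ∀ t : Fin M, ∃ r : Fin 3, x (ℓ t r).1 = (ℓ t r).2)
    (F : Type) [Field F]
    (σ : Fin (Fintype.card (LVar N M)) ≃ LVar N M)
    -- j enumerates the v-variables in the order induced by σ
    (j : Fin N ≃ Fin N)
    (hj : StrictMono fun r : Fin N =>
      (σ.symm (Sum.inl (j r)) : Fin (Fintype.card (LVar N M))))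
    -- τ is an arbitrary bijection from the v-variables to the x-variables
    (τ : Fin N ≃ Fin N)
    (w : ℕ)
    (href : IPSLinRefutation σ w
      (fun C : ↥(PhiOne ℓ ∪ PhiTwo ℓ) => clausePoly (F := F) C.1)) :
    ∃ w' ≤ w, IPSLinRefutation (j.trans τ) w'
      (fun t : Fin M =>
        clausePoly (F := F)
          (Finset.image (fun r : Fin 3 => ℓ t r) Finset.univ)) :=
  stmt_13_general N M ℓ hdist F σ j hj τ w href
end

section
/- Let R be a commutative ring, n ∈ ℕ, and x_1, …, x_n ∈ R. Then 1 − Σ_{k=1}^n x_k = ∏_{k=1}^n (1 − x_k) − Σ_{1 ≤ k < ℓ ≤ n} x_k · x_ℓ · ∏_{ℓ' = ℓ+1}^n (1 − x_{ℓ'}). -/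
/-!
Write `P ℓ = ∏_{m > ℓ} (1 - x m)`. Expanding `∏ (1 - x)` from the smallest index upwards gives
`∏_{m ∈ s} (1 - x m) = 1 - ∑_{ℓ ∈ s} x ℓ * P ℓ` for every `s`; taking `s = {m | k < m}` yields
`P k + ∑_{ℓ > k} x ℓ * P ℓ = 1`. Grouping the pair sum by its first index `k`, both sides of the
theorem become `1 - ∑_k x k * (P k + ∑_{ℓ > k} x ℓ * P ℓ)`.
-/

namespace Finset

variable {ι R : Type*} [CommRing R] [LinearOrder ι]

theorem prod_one_sub_ordered_gt (s : Finset ι) (f : ι → R) :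
    ∏ i ∈ s, (1 - f i) = 1 - ∑ i ∈ s, f i * ∏ j ∈ s with i < j, (1 - f j) :=
  prod_one_sub_ordered (ι := ιᵒᵈ) s f

theorem prod_filter_gt_one_sub_add_sum_eq_one (s : Finset ι) (f : ι → R) (k : ι) :
    ∏ m ∈ s with k < m, (1 - f m) + ∑ l ∈ s with k < l, f l * ∏ m ∈ s with l < m, (1 - f m) = 1 := by
  rw [prod_one_sub_ordered_gt, sub_add_eq_add_sub, add_sub_assoc, add_eq_left, sub_eq_zero]
  refine sum_congr rfl fun l hkl => ?_
  rw [filter_filter]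
  congr 2
  ext m
  simp only [mem_filter] at hkl ⊢
  exact and_congr_right fun _ => ⟨fun hlm => ⟨hkl.2.trans hlm, hlm⟩, And.right⟩

end Finset

open Finset in
/-- The pigeon-axiom rewriting identity:
`1 − Σ_k x_k = ∏_k (1 − x_k) − Σ_{k<ℓ} x_k·x_ℓ·∏_{ℓ'>ℓ} (1 − x_{ℓ'})`. -/
theorem stmt_17 (R : Type) [CommRing R] (n : ℕ) (x : Fin n → R) :
    1 - ∑ k : Fin n, x k =
      (∏ k : Fin n, (1 - x k)) -
        ∑ p ∈ Finset.univ.filter (fun p : Fin n × Fin n => p.1 < p.2),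
          x p.1 * x p.2 * ∏ m ∈ Finset.univ.filter (fun m : Fin n => p.2 < m), (1 - x m) := by
  have hpairs : ∑ p ∈ univ.filter (fun p : Fin n × Fin n => p.1 < p.2),
        x p.1 * x p.2 * ∏ m with p.2 < m, (1 - x m) =
      ∑ k, x k * ∑ l with k < l, x l * ∏ m with l < m, (1 - x m) := by
    simp only [sum_filter, Fintype.sum_prod_type, mul_sum, mul_assoc, mul_ite, mul_zero]
  rw [hpairs, prod_one_sub_ordered_gt, sub_sub, ← sum_add_distrib]
  simp only [← mul_add, prod_filter_gt_one_sub_add_sum_eq_one, mul_one]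
end
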